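/- arXiv:1003.5969 — 6 statements merged into one kernel-verified Lean document; each statement's English description precedes it below -/
import Mathlib

section
/- Let W be the symmetric group S_n with simple reflections s_1,...,s_{n-1} (s_i the transposition (i, i+1)). If w ∈ S_n has full support (every reduced expression of w involves all simple reflections), s_j is the unique left descent of w, and the support of s_j·w does not contain s_j, then w = s_j s_{j-1} ⋯ s_1 s_{j+1} s_{j+2} ⋯ s_{n-1}. In particular, w is a Coxeter element of S_n. -/
/-!
Identify `W` with `Perm (Fin (m + 1))`, `s_i` being the swap of `i` and `i + 1`. The Coxeter
length is the number of inversions, so `s_i` is a left descent of `w` iff `w⁻¹ (i + 1) < w⁻¹ i`,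
and `i ∉ supp w` iff `w` stabilises the initial segment `{0, …, i}`.

Put `u = w⁻¹`. The descent hypotheses say that `u` increases on `{0, …, j}` and on
`{j + 1, …, m}`; `j ∉ supp (s_j w)` says that `u ∘ s_j` stabilises `{0, …, j}`; full support says
that `u` stabilises no proper initial segment. If `u (j + 1) > 0`, every value below `u (j + 1)` is
taken at a position `k < j`, where `u k ≥ k`, so `u` would stabilise `{0, …, u (j + 1) - 1}`;
symmetrically `u j < m` would make `u` stabilise `{u j + 1, …, m}`. Hence `u (j + 1) = 0` and
`u j = m`, and monotonicity on the two blocks determines `u`. It agrees with the inverse of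
`s_j ⋯ s_0 · s_{j+1} ⋯ s_{m-1} = (0 1 … j+1)⁻¹ · (j+1 … m)`.
-/

/-- The support of `w`: the set of simple reflection indices appearing in some
(equivalently, any) reduced word for `w`. -/
def CoxeterSystem.supp {B W : Type*} [Group W] {M : CoxeterMatrix B}
    (cs : CoxeterSystem M W) (w : W) : Set B :=
  { i | ∃ ω : List B, cs.IsReduced ω ∧ cs.wordProd ω = w ∧ i ∈ ω }

open Equiv Finset
open scoped Pointwise

namespace CoxeterSystem

variable {B W : Type*} [Group W] {M : CoxeterMatrix B} (cs : CoxeterSystem M W)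

theorem length_eq_of_le_succ_of_exists_lt (f : W → ℕ) (h_one : f 1 = 0)
    (h_le : ∀ w i, f (cs.simple i * w) ≤ f w + 1)
    (h_lt : ∀ w, w ≠ 1 → ∃ i, f (cs.simple i * w) < f w) (w : W) :
    cs.length w = f w := by
  have f_le : ∀ ω, f (cs.wordProd ω) ≤ ω.length := by
    intro ω
    induction ω with
    | nil => simp [h_one]
    | cons i ω ih => grw [wordProd_cons, h_le, ih, List.length_cons]
  have length_le : ∀ n w, f w = n → cs.length w ≤ n := by
    intro n
    induction n using Nat.strong_induction_on with
    | _ n ih =>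
      intro w hw
      by_cases h1 : w = 1
      · simp [h1]
      obtain ⟨i, hi⟩ := h_lt w h1
      calc cs.length w = cs.length (cs.simple i * (cs.simple i * w)) := by
            rw [simple_mul_simple_cancel_left]
        _ ≤ cs.length (cs.simple i) + cs.length (cs.simple i * w) := cs.length_mul_le _ _
        _ ≤ 1 + f (cs.simple i * w) := by rw [length_simple]; grw [ih _ (hw ▸ hi) _ rfl]
        _ ≤ n := by omega
  obtain ⟨ω, hω, rfl⟩ := cs.exists_isReduced w
  exact le_antisymm (length_le _ _ rfl) (hω.eq ▸ f_le ω)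

end CoxeterSystem

namespace Equiv.Perm

variable {n : ℕ}

def inversions (σ : Perm (Fin n)) : Finset (Fin n × Fin n) :=
  {p | p.1 < p.2 ∧ σ p.2 < σ p.1}

@[simp]
theorem mem_inversions {σ : Perm (Fin n)} {p : Fin n × Fin n} :
    p ∈ σ.inversions ↔ p.1 < p.2 ∧ σ p.2 < σ p.1 := by
  simp [inversions]

@[simp]
theorem inversions_one : (1 : Perm (Fin n)).inversions = ∅ := by
  ext p
  simpa using le_of_lt

variable {m : ℕ}

theorem swap_castSucc_succ_lt_swap_iff {c : Fin m} {x y : Fin (m + 1)}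
    (hxy : ¬(x = c.castSucc ∧ y = c.succ)) (hyx : ¬(x = c.succ ∧ y = c.castSucc)) :
    swap c.castSucc c.succ x < swap c.castSucc c.succ y ↔ x < y := by
  simp only [swap_apply_def]
  split_ifs <;> simp only [Fin.lt_def, Fin.ext_iff, Fin.val_succ, Fin.val_castSucc] at * <;>
    omega

theorem inversions_swap_mul_of_lt {σ : Perm (Fin (m + 1))} {c : Fin m}
    (h : σ⁻¹ c.castSucc < σ⁻¹ c.succ) :
    (swap c.castSucc c.succ * σ).inversions =
      insert (σ⁻¹ c.castSucc, σ⁻¹ c.succ) σ.inversions := by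
  ext ⟨p, q⟩
  obtain ⟨a, rfl⟩ := σ⁻¹.surjective p
  obtain ⟨b, rfl⟩ := σ⁻¹.surjective q
  rw [Perm.inv_def] at h ⊢
  simp only [mem_inversions, Finset.mem_insert, Prod.mk.injEq, mul_apply,
    EmbeddingLike.apply_eq_iff_eq, apply_symm_apply]
  by_cases hab : a = c.castSucc ∧ b = c.succ
  · obtain ⟨rfl, rfl⟩ := hab
    simp [h]
  by_cases hba : a = c.succ ∧ b = c.castSucc
  · obtain ⟨rfl, rfl⟩ := hba
    simp [h.not_gt, Fin.castSucc_lt_succ.not_gt, Fin.castSucc_lt_succ.ne]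
  rw [swap_castSucc_succ_lt_swap_iff (fun h' => hba ⟨h'.2, h'.1⟩)
    (fun h' => hab ⟨h'.2, h'.1⟩)]
  tauto

theorem card_inversions_swap_mul_of_lt {σ : Perm (Fin (m + 1))} {c : Fin m}
    (h : σ⁻¹ c.castSucc < σ⁻¹ c.succ) :
    #(swap c.castSucc c.succ * σ).inversions = #σ.inversions + 1 := by
  rw [inversions_swap_mul_of_lt h, Finset.card_insert_of_notMem]
  simp [Perm.inv_def, Fin.castSucc_lt_succ.le]

theorem card_inversions_swap_mul_of_gt {σ : Perm (Fin (m + 1))} {c : Fin m}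
    (h : σ⁻¹ c.succ < σ⁻¹ c.castSucc) :
    #(swap c.castSucc c.succ * σ).inversions + 1 = #σ.inversions := by
  have h' : (swap c.castSucc c.succ * σ)⁻¹ c.castSucc <
      (swap c.castSucc c.succ * σ)⁻¹ c.succ := by
    simpa [mul_inv_rev] using h
  simpa [← mul_assoc] using (card_inversions_swap_mul_of_lt h').symm

theorem exists_inv_succ_lt_inv_castSucc {σ : Perm (Fin (m + 1))} (hσ : σ ≠ 1) :
    ∃ c : Fin m, σ⁻¹ c.succ < σ⁻¹ c.castSucc := by
  by_contra! h
  have hmono : StrictMono ⇑(σ⁻¹) := Fin.strictMono_iff_lt_succ.2 fun c =>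
    (h c).lt_of_ne (σ⁻¹.injective.ne Fin.castSucc_lt_succ.ne)
  have : ⇑(σ⁻¹) = id := (hmono.range_inj strictMono_id).1 (by simp)
  exact hσ (inv_eq_one.1 (DFunLike.coe_injective this))

/-- The standard parabolic subgroup `W_{S ∖ {s_i}}`, realised as the stabiliser of `{0, …, i}`. -/
def cutStabilizer (i : Fin m) : Subgroup (Perm (Fin (m + 1))) :=
  MulAction.stabilizer (Perm (Fin (m + 1))) (Set.Iic i.castSucc)

theorem mem_cutStabilizer {i : Fin m} {σ : Perm (Fin (m + 1))} :
    σ ∈ cutStabilizer i ↔ ∀ x, σ x ≤ i.castSucc ↔ x ≤ i.castSucc := by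
  rw [cutStabilizer, MulAction.mem_stabilizer_set]
  rfl

theorem mem_cutStabilizer_of_forall_le {i : Fin m} {σ : Perm (Fin (m + 1))}
    (h : ∀ x ≤ i.castSucc, σ x ≤ i.castSucc) : σ ∈ cutStabilizer i :=
  (MulAction.mem_stabilizer_set' (Set.toFinite _)).2 h

theorem mem_cutStabilizer_of_forall_lt {i : Fin m} {σ : Perm (Fin (m + 1))}
    (h : ∀ x, i.castSucc < x → i.castSucc < σ x) : σ ∈ cutStabilizer i := by
  rw [cutStabilizer, ← stabilizer_compl, MulAction.mem_stabilizer_set' (Set.toFinite _)]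
  simpa using h

theorem swap_mem_cutStabilizer {i k : Fin m} (h : k ≠ i) :
    swap k.castSucc k.succ ∈ cutStabilizer i := by
  rw [mem_cutStabilizer]
  intro x
  rw [Ne, Fin.ext_iff] at h
  simp only [swap_apply_def]
  split_ifs <;> simp only [Fin.le_def, Fin.ext_iff, Fin.val_succ, Fin.val_castSucc] at * <;>
    omega

end Equiv.Perm

namespace Fin

theorem val_cycleIcc {n : ℕ} [NeZero n] {i j k : Fin n} (hij : i ≤ j) :
    (cycleIcc i j k : ℕ) =
      if i ≤ k ∧ k < j then (k : ℕ) + 1 else if k = j then (i : ℕ) else k := by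
  rcases lt_or_ge k i with hki | hik
  · rw [cycleIcc_of_lt hki, if_neg (by simp [hki.not_ge]), if_neg (hki.trans_le hij).ne]
  rcases lt_or_ge j k with hjk | hkj
  · rw [cycleIcc_of_gt hjk, if_neg (by simp [hjk.not_gt]), if_neg hjk.ne']
  rw [cycleIcc_of_le_of_le hik hkj]
  rcases hkj.lt_or_eq with hkj | rfl
  · rw [if_neg hkj.ne, if_pos ⟨hik, hkj⟩, val_add_one_of_lt' (by omega)]
  · simp

theorem cycleIcc_mul_swap {m : ℕ} {a : Fin (m + 1)} {c : Fin m} (h : a ≤ c.castSucc) :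
    cycleIcc a c.castSucc * swap c.castSucc c.succ = cycleIcc a c.succ := by
  ext x
  rw [Perm.mul_apply, val_cycleIcc h, val_cycleIcc (h.trans (castSucc_le_succ c))]
  rw [le_def] at h
  simp only [swap_apply_def]
  split_ifs <;>
    simp only [le_def, lt_def, Fin.ext_iff, val_succ, val_castSucc, not_true_eq_false] at * <;>
    omega

theorem val_add_sub_le_of_lt_succ {m : ℕ} {u : Fin (m + 1) → Fin (m + 1)} {lo hi : ℕ}
    (h : ∀ k : Fin m, lo ≤ k → (k : ℕ) < hi → u k.castSucc < u k.succ)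
    {p q : Fin (m + 1)} (hlo : lo ≤ p) (hpq : p ≤ q) (hq : (q : ℕ) ≤ hi) :
    (u p : ℕ) + (q - p) ≤ u q := by
  obtain ⟨d, hd⟩ := Nat.exists_eq_add_of_le (le_def.1 hpq)
  induction d generalizing q with
  | zero => simp [Fin.ext (hd.trans p.val.add_zero)]
  | succ d ih =>
    let k : Fin m := ⟨p + d, by omega⟩
    have hq' : k.succ = q := Fin.ext (by simp [k, hd]; omega)
    have := ih (q := k.castSucc) (le_def.2 (by simp [k])) (by simp [k]; omega) (by simp [k])
    have := lt_def.1 (h k (by simp [k]; omega) (by simp [k]; omega))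
    rw [← hq']
    simp only [val_succ, val_castSucc, k] at *
    omega

end Fin

namespace List

theorem filter_finRange_Ico_succ {m : ℕ} {a : Fin (m + 1)} {c : Fin m}
    (h : a ≤ c.castSucc) :
    (finRange m).filter (fun i => decide (a ≤ i.castSucc ∧ i.castSucc < c.succ)) =
      (finRange m).filter (fun i => decide (a ≤ i.castSucc ∧ i.castSucc < c.castSucc)) ++
        [c] := by
  refine ((pairwise_lt_finRange m).filter _).eq_of_mem_iff
    (pairwise_append.2 ⟨(pairwise_lt_finRange m).filter _, pairwise_singleton _ _, ?_⟩) ?_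
  · intro x hx y hy
    rw [List.mem_singleton.1 hy]
    exact Fin.castSucc_lt_castSucc_iff.1 (of_decide_eq_true (List.mem_filter.1 hx).2).2
  · intro x
    simp only [List.mem_filter, List.mem_append, List.mem_singleton, List.mem_finRange,
      true_and, decide_eq_true_eq, Fin.le_def, Fin.lt_def, Fin.ext_iff, Fin.val_castSucc,
      Fin.val_succ] at h ⊢
    omega

end List

namespace CoxeterSystem

open Perm

variable {m : ℕ} {M : CoxeterMatrix (Fin m)} (cs : CoxeterSystem M (Perm (Fin (m + 1))))

theorem length_eq_card_inversions (hs : ∀ i, cs.simple i = swap i.castSucc i.succ)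
    (σ : Perm (Fin (m + 1))) : cs.length σ = #σ.inversions := by
  refine cs.length_eq_of_le_succ_of_exists_lt (fun σ => #σ.inversions) (by simp)
    (fun σ i => ?_) (fun σ hσ => ?_) σ
  · rw [hs]
    rcases lt_or_gt_of_ne (σ⁻¹.injective.ne (Fin.castSucc_lt_succ (i := i)).ne) with h | h
    · exact (card_inversions_swap_mul_of_lt h).le
    · have := card_inversions_swap_mul_of_gt h
      omega
  · obtain ⟨i, hi⟩ := exists_inv_succ_lt_inv_castSucc hσ
    have := card_inversions_swap_mul_of_gt hi
    exact ⟨i, by rw [hs]; omega⟩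

theorem isLeftDescent_iff_inv_succ_lt_inv_castSucc
    (hs : ∀ i, cs.simple i = swap i.castSucc i.succ) {σ : Perm (Fin (m + 1))} {i : Fin m} :
    cs.IsLeftDescent σ i ↔ σ⁻¹ i.succ < σ⁻¹ i.castSucc := by
  rw [IsLeftDescent, length_eq_card_inversions cs hs, length_eq_card_inversions cs hs, hs]
  rcases lt_or_gt_of_ne (σ⁻¹.injective.ne (Fin.castSucc_lt_succ (i := i)).ne) with h | h
  · have := card_inversions_swap_mul_of_lt h
    simp only [h.not_gt, iff_false]
    omega
  · have := card_inversions_swap_mul_of_gt h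
    simp only [h, iff_true]
    omega

theorem not_isLeftDescent_iff_inv_castSucc_lt_inv_succ
    (hs : ∀ i, cs.simple i = swap i.castSucc i.succ) {σ : Perm (Fin (m + 1))} {i : Fin m} :
    ¬cs.IsLeftDescent σ i ↔ σ⁻¹ i.castSucc < σ⁻¹ i.succ := by
  rw [isLeftDescent_iff_inv_succ_lt_inv_castSucc cs hs, not_lt]
  exact ⟨fun h => h.lt_of_ne (σ⁻¹.injective.ne (Fin.castSucc_lt_succ (i := i)).ne),
    le_of_lt⟩

theorem wordProd_mem_cutStabilizer (hs : ∀ i, cs.simple i = swap i.castSucc i.succ)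
    {i : Fin m} {ω : List (Fin m)} (h : i ∉ ω) : cs.wordProd ω ∈ cutStabilizer i := by
  refine Subgroup.list_prod_mem _ fun σ hσ => ?_
  obtain ⟨k, hk, rfl⟩ := List.mem_map.1 hσ
  exact hs k ▸ swap_mem_cutStabilizer (ne_of_mem_of_not_mem hk h)

theorem notMem_of_isReduced_of_wordProd_mem_cutStabilizer
    (hs : ∀ i, cs.simple i = swap i.castSucc i.succ) {i : Fin m} {ω : List (Fin m)}
    (hω : cs.IsReduced ω) (h : cs.wordProd ω ∈ cutStabilizer i) : i ∉ ω := by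
  induction ω with
  | nil => simp
  | cons k ω ih =>
    have htail : cs.simple k * cs.wordProd (k :: ω) = cs.wordProd ω := by
      rw [wordProd_cons, simple_mul_simple_cancel_left]
    have hdesc : cs.IsLeftDescent (cs.wordProd (k :: ω)) k := by
      have := cs.length_wordProd_le ω
      rw [IsLeftDescent, htail, hω.eq, List.length_cons]
      omega
    have hki : k ≠ i := by
      rintro rfl
      rw [isLeftDescent_iff_inv_succ_lt_inv_castSucc cs hs] at hdesc
      have hinv := mem_cutStabilizer.1 (inv_mem h)
      exact (hinv k.succ).not.2 Fin.castSucc_lt_succ.not_ge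
        (hdesc.le.trans ((hinv k.castSucc).2 le_rfl))
    rw [List.mem_cons, not_or]
    exact ⟨hki.symm, ih (by simpa using hω.drop 1)
      (htail ▸ hs k ▸ mul_mem (swap_mem_cutStabilizer hki) h)⟩

theorem mem_supp_iff_notMem_cutStabilizer (hs : ∀ i, cs.simple i = swap i.castSucc i.succ)
    {i : Fin m} {σ : Perm (Fin (m + 1))} : i ∈ cs.supp σ ↔ σ ∉ cutStabilizer i := by
  constructor
  · rintro ⟨ω, hω, rfl, hi⟩ h
    exact notMem_of_isReduced_of_wordProd_mem_cutStabilizer cs hs hω h hi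
  · intro h
    obtain ⟨ω, hω, rfl⟩ := cs.exists_isReduced σ
    exact ⟨ω, hω, rfl, by_contra fun hi => h (wordProd_mem_cutStabilizer cs hs hi)⟩

theorem wordProd_filter_Ico (hs : ∀ i, cs.simple i = swap i.castSucc i.succ)
    (a b : Fin (m + 1)) (hab : a ≤ b) :
    cs.wordProd ((List.finRange m).filter fun i => decide (a ≤ i.castSucc ∧ i.castSucc < b)) =
      Fin.cycleIcc a b := by
  have empty : ∀ b : Fin (m + 1), b ≤ a →
      (List.finRange m).filter (fun i => decide (a ≤ i.castSucc ∧ i.castSucc < b)) = [] := by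
    intro b hb
    simpa [List.filter_eq_nil_iff] using fun i hi => (hb.trans hi).not_gt
  induction b using Fin.induction with
  | zero =>
    obtain rfl := Fin.le_zero_iff.1 hab
    rw [empty 0 le_rfl, wordProd_nil, Fin.cycleIcc_eq]
  | succ c ih =>
    rcases hab.lt_or_eq with hlt | rfl
    · have h : a ≤ c.castSucc := Fin.le_castSucc_iff.2 hlt
      rw [List.filter_finRange_Ico_succ h, wordProd_append, ih h, wordProd_singleton, hs,
        Fin.cycleIcc_mul_swap h]
    · rw [empty _ le_rfl, wordProd_nil, Fin.cycleIcc_eq]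

theorem wordProd_filter_le_reverse_append_filter_gt
    (hs : ∀ i, cs.simple i = swap i.castSucc i.succ) (j : Fin m) :
    cs.wordProd (((List.finRange m).filter (fun i => decide (i.1 ≤ j.1))).reverse
      ++ (List.finRange m).filter (fun i => decide (j.1 < i.1))) =
      (Fin.cycleIcc 0 j.succ)⁻¹ * Fin.cycleIcc j.succ (Fin.last m) := by
  have hA : (List.finRange m).filter (fun i => decide (i.1 ≤ j.1)) =
      (List.finRange m).filter (fun i => decide (0 ≤ i.castSucc ∧ i.castSucc < j.succ)) :=
    List.filter_congr fun i _ => by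
      simp only [Fin.le_def, Fin.lt_def, Fin.val_castSucc, Fin.val_succ, Fin.val_zero,
        decide_eq_decide]
      omega
  have hB : (List.finRange m).filter (fun i => decide (j.1 < i.1)) =
      (List.finRange m).filter
        (fun i => decide (j.succ ≤ i.castSucc ∧ i.castSucc < Fin.last m)) :=
    List.filter_congr fun i _ => by
      simp only [Fin.le_def, Fin.lt_def, Fin.val_castSucc, Fin.val_succ, Fin.val_last,
        decide_eq_decide]
      omega
  rw [wordProd_append, wordProd_reverse, hA, hB, cs.wordProd_filter_Ico hs _ _ (Fin.zero_le _),
    cs.wordProd_filter_Ico hs _ _ (Fin.le_last _)]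

end CoxeterSystem

namespace Equiv.Perm

variable {m : ℕ} {u : Perm (Fin (m + 1))} {j : Fin m}

theorem val_apply_le_iff_of_mul_swap_mem (h : u * swap j.castSucc j.succ ∈ cutStabilizer j)
    {x : Fin (m + 1)} (hx : x ≠ j.castSucc) (hx' : x ≠ j.succ) :
    (u x : ℕ) ≤ j ↔ (x : ℕ) ≤ j := by
  simpa [swap_apply_of_ne_of_ne hx hx', Fin.le_def] using mem_cutStabilizer.1 h x

theorem val_apply_succ_le_of_mul_swap_mem (h : u * swap j.castSucc j.succ ∈ cutStabilizer j) :
    (u j.succ : ℕ) ≤ j := by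
  simpa [Fin.le_def] using mem_cutStabilizer.1 h j.castSucc

theorem lt_val_apply_castSucc_of_mul_swap_mem
    (h : u * swap j.castSucc j.succ ∈ cutStabilizer j) : (j : ℕ) < u j.castSucc := by
  simpa [Fin.le_def] using mem_cutStabilizer.1 h j.succ

theorem apply_succ_eq_zero (hasc : ∀ k : Fin m, k ≠ j → u k.castSucc < u k.succ)
    (hcut : u * swap j.castSucc j.succ ∈ cutStabilizer j)
    (hfull : ∀ i, u ∉ cutStabilizer i) : u j.succ = 0 := by
  have ha := val_apply_succ_le_of_mul_swap_mem hcut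
  have hb := lt_val_apply_castSucc_of_mul_swap_mem hcut
  by_contra h0
  have ha0 : (u j.succ : ℕ) ≠ 0 := fun h => h0 (Fin.ext h)
  apply hfull ⟨u j.succ - 1, by omega⟩
  rw [← inv_mem_iff]
  refine mem_cutStabilizer_of_forall_le fun v hv => ?_
  obtain ⟨k, rfl⟩ := u.surjective v
  rw [Perm.inv_def, symm_apply_apply, Fin.le_def]
  rw [Fin.le_def] at hv
  simp only [Fin.val_castSucc] at hv ⊢
  have hkj : (k : ℕ) < j := by
    by_contra! hjk
    by_cases hk : k = j.castSucc
    · subst hk; omega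
    by_cases hk' : k = j.succ
    · subst hk'; omega
    have := (val_apply_le_iff_of_mul_swap_mem hcut hk hk').not
    simp only [Fin.val_succ, Fin.val_castSucc, Fin.ext_iff] at hk hk' this
    omega
  have := Fin.val_add_sub_le_of_lt_succ (lo := 0) (hi := j) (q := k)
    (fun k _ hk => hasc k (Fin.ne_of_lt hk)) (Nat.zero_le _) (Fin.zero_le k) hkj.le
  simp only [Fin.val_zero] at this
  omega

theorem apply_castSucc_eq_last (hasc : ∀ k : Fin m, k ≠ j → u k.castSucc < u k.succ)
    (hcut : u * swap j.castSucc j.succ ∈ cutStabilizer j)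
    (hfull : ∀ i, u ∉ cutStabilizer i) : u j.castSucc = Fin.last m := by
  have ha := val_apply_succ_le_of_mul_swap_mem hcut
  have hb := lt_val_apply_castSucc_of_mul_swap_mem hcut
  by_contra hm
  have hbm : (u j.castSucc : ℕ) < m := Fin.val_lt_last hm
  apply hfull ⟨u j.castSucc, hbm⟩
  rw [← inv_mem_iff]
  refine mem_cutStabilizer_of_forall_lt fun v hv => ?_
  obtain ⟨k, rfl⟩ := u.surjective v
  rw [Perm.inv_def, symm_apply_apply, Fin.lt_def]
  rw [Fin.lt_def] at hv
  simp only [Fin.val_castSucc] at hv ⊢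
  have hjk : (j : ℕ) + 2 ≤ k := by
    by_contra! hkj
    by_cases hk : k = j.castSucc
    · subst hk; omega
    by_cases hk' : k = j.succ
    · subst hk'; omega
    have := val_apply_le_iff_of_mul_swap_mem hcut hk hk'
    simp only [Fin.val_succ, Fin.val_castSucc, Fin.ext_iff] at hk hk' this
    omega
  have := Fin.val_add_sub_le_of_lt_succ (lo := j + 1) (hi := m) (p := k) (q := Fin.last m)
    (fun k hk _ => hasc k (Fin.ne_of_gt (Fin.lt_def.2 hk))) (by omega) (Fin.le_last k) le_rfl
  simp only [Fin.val_last] at this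
  omega

theorem val_apply_eq_of_apply_succ_eq_zero_of_apply_castSucc_eq_last
    (hasc : ∀ k : Fin m, k ≠ j → u k.castSucc < u k.succ)
    (hcut : u * swap j.castSucc j.succ ∈ cutStabilizer j)
    (h0 : u j.succ = 0) (hlast : u j.castSucc = Fin.last m) (y : Fin (m + 1)) :
    (u y : ℕ) = if (y : ℕ) < j then (y : ℕ) + 1 else if (y : ℕ) = j then m
      else if (y : ℕ) = j + 1 then 0 else (y : ℕ) - 1 := by
  have hy := y.isLt
  have hj := j.isLt
  split_ifs with h1 h2 h3
  · have hpos : (u 0 : ℕ) ≠ 0 := fun h =>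
      Fin.succ_ne_zero j (u.injective (h0.trans (Fin.ext h).symm))
    let z : Fin (m + 1) := ⟨j - 1, by omega⟩
    have hz : (u z : ℕ) ≤ j := (val_apply_le_iff_of_mul_swap_mem hcut
      (by simp [z, Fin.ext_iff]; omega) (by simp [z, Fin.ext_iff])).2 (by simp [z])
    have hlow := Fin.val_add_sub_le_of_lt_succ (lo := 0) (hi := j) (p := 0) (q := y)
      (fun k _ hk => hasc k (Fin.ne_of_lt hk)) le_rfl (Fin.zero_le y) h1.le
    have hup := Fin.val_add_sub_le_of_lt_succ (lo := 0) (hi := j) (p := y) (q := z)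
      (fun k _ hk => hasc k (Fin.ne_of_lt hk)) (Nat.zero_le _) (Fin.le_def.2 (by simp [z]; omega))
      (by simp [z])
    simp only [Fin.val_zero, z] at hlow hup hz
    omega
  · rw [show y = j.castSucc from Fin.ext h2, hlast, Fin.val_last]
  · rw [show y = j.succ from Fin.ext h3, h0, Fin.val_zero]
  · let z : Fin (m + 1) := ⟨j + 2, by omega⟩
    have hz : (j : ℕ) < u z := not_le.1 <| (val_apply_le_iff_of_mul_swap_mem hcut
      (by simp [z, Fin.ext_iff]) (by simp [z, Fin.ext_iff])).not.2 (by simp [z])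
    have hm : (u (Fin.last m) : ℕ) ≠ m := fun h =>
      (Fin.castSucc_lt_last j).ne' (u.injective (Fin.ext (h.trans (congrArg Fin.val hlast).symm)))
    have hlow := Fin.val_add_sub_le_of_lt_succ (lo := j + 1) (hi := m) (p := z) (q := y)
      (fun k hk _ => hasc k (Fin.ne_of_gt (Fin.lt_def.2 hk))) (by simp [z])
      (Fin.le_def.2 (by simp [z]; omega)) (by omega)
    have hup := Fin.val_add_sub_le_of_lt_succ (lo := j + 1) (hi := m) (p := y) (q := Fin.last m)
      (fun k hk _ => hasc k (Fin.ne_of_gt (Fin.lt_def.2 hk))) (by omega) (Fin.le_last y) le_rfl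
    have := (u (Fin.last m)).isLt
    simp only [Fin.val_last, z] at hlow hup hz this
    omega

theorem cycleIcc_mul_eq_cycleIcc (hasc : ∀ k : Fin m, k ≠ j → u k.castSucc < u k.succ)
    (hcut : u * swap j.castSucc j.succ ∈ cutStabilizer j)
    (hfull : ∀ i, u ∉ cutStabilizer i) :
    Fin.cycleIcc j.succ (Fin.last m) * u = Fin.cycleIcc 0 j.succ := by
  ext y
  have := val_apply_eq_of_apply_succ_eq_zero_of_apply_castSucc_eq_last hasc hcut
    (apply_succ_eq_zero hasc hcut hfull) (apply_castSucc_eq_last hasc hcut hfull) y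
  rw [mul_apply, Fin.val_cycleIcc (Fin.le_last _), Fin.val_cycleIcc (Fin.zero_le _)]
  have := (u y).isLt
  simp only [Fin.le_def, Fin.lt_def, Fin.ext_iff, Fin.val_succ, Fin.val_last, Fin.val_zero] at *
  split_ifs at * <;> omega

end Equiv.Perm

theorem stmt_0_general {m : ℕ}
    (cs : CoxeterSystem (CoxeterMatrix.Aₙ m) (Equiv.Perm (Fin (m + 1))))
    (hs : ∀ i : Fin m, cs.simple i = Equiv.swap i.castSucc i.succ)
    (w : Equiv.Perm (Fin (m + 1)))
    (hfull : cs.supp w = Set.univ)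
    (j : Fin m)
    (huniq : ∀ i : Fin m, cs.IsLeftDescent w i → i = j)
    (hnot : j ∉ cs.supp (cs.simple j * w)) :
    w = cs.wordProd
        (((List.finRange m).filter (fun i => decide (i.1 ≤ j.1))).reverse
          ++ (List.finRange m).filter (fun i => decide (j.1 < i.1))) ∧
      ∃ ω : List (Fin m), ω.Nodup ∧ (∀ i : Fin m, i ∈ ω) ∧ w = cs.wordProd ω := by
  have hasc : ∀ k : Fin m, k ≠ j → w⁻¹ k.castSucc < w⁻¹ k.succ := fun k hk =>
    (cs.not_isLeftDescent_iff_inv_castSucc_lt_inv_succ hs).1 (mt (huniq k) hk)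
  have hcut : w⁻¹ * swap j.castSucc j.succ ∈ Perm.cutStabilizer j := by
    have := inv_mem (not_not.1 ((cs.mem_supp_iff_notMem_cutStabilizer hs).not.1 hnot))
    rwa [hs, mul_inv_rev, swap_inv] at this
  have hstab : ∀ i, w⁻¹ ∉ Perm.cutStabilizer i := fun i => by
    rw [inv_mem_iff, ← cs.mem_supp_iff_notMem_cutStabilizer hs, hfull]
    trivial
  have hw : w = cs.wordProd
      (((List.finRange m).filter (fun i => decide (i.1 ≤ j.1))).reverse
        ++ (List.finRange m).filter (fun i => decide (j.1 < i.1))) := by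
    rw [cs.wordProd_filter_le_reverse_append_filter_gt hs,
      ← Perm.cycleIcc_mul_eq_cycleIcc hasc hcut hstab]
    group
  refine ⟨hw, _, ?_, fun i => ?_, hw⟩
  · simpa [List.nodup_append, List.Nodup.filter, List.nodup_finRange] using
      fun a ha b hb => (ha.trans_lt hb).ne
  · simpa using le_or_gt i j

theorem stmt_0 {m : ℕ}
    (cs : CoxeterSystem (CoxeterMatrix.Aₙ m) (Equiv.Perm (Fin (m + 1))))
    (hs : ∀ i : Fin m, cs.simple i = Equiv.swap i.castSucc i.succ)
    (w : Equiv.Perm (Fin (m + 1)))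
    (hfull : cs.supp w = Set.univ)
    (j : Fin m)
    (hdesc : cs.IsLeftDescent w j)
    (huniq : ∀ i : Fin m, cs.IsLeftDescent w i → i = j)
    (hnot : j ∉ cs.supp (cs.simple j * w)) :
    w = cs.wordProd
        (((List.finRange m).filter (fun i => decide (i.1 ≤ j.1))).reverse
          ++ (List.finRange m).filter (fun i => decide (j.1 < i.1))) ∧
      ∃ ω : List (Fin m), ω.Nodup ∧ (∀ i : Fin m, i ∈ ω) ∧ w = cs.wordProd ω :=
  stmt_0_general cs hs w hfull j huniq hnot
end

section
/- Let W be a Coxeter group and w ∈ W with full support, and suppose that for every s ∈ D_L(w), Supp(sw) = S \ {s}. Then any two elements of D_L(w) commute. -/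
namespace StrongExchangeAux
open CoxeterSystem List
set_option linter.unusedSectionVars false
variable {B W : Type*} [Group W] {M : CoxeterMatrix B} (cs : CoxeterSystem M W)

/-- The letter function of alternating words. -/
def awc (i i' : B) (k : ℕ) : B := if Even k then i' else i

theorem alternatingWord_succ_cons (i i' : B) (k : ℕ) :
    alternatingWord i i' (k + 1) = awc i i' k :: alternatingWord i i' k :=
  alternatingWord_succ' i i' k

theorem awc_add_two (i i' : B) (k : ℕ) : awc i i' (k + 2) = awc i i' k := by
  simp [awc, Nat.even_add]

/-- Products of alternating words. -/
def Gp (i i' : B) (k : ℕ) : W := cs.wordProd (alternatingWord i i' k)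

theorem Gp_succ (i i' : B) (k : ℕ) :
    Gp cs i i' (k + 1) = cs.simple (awc i i' k) * Gp cs i i' k := by
  rw [Gp, alternatingWord_succ_cons, wordProd_cons]; rfl

/-- Entries of the right inversion sequence of an alternating word. -/
def fent (i i' : B) (k : ℕ) : W :=
  (Gp cs i i' k)⁻¹ * cs.simple (awc i i' k) * Gp cs i i' k

def uent (i i' : B) (k : ℕ) : W :=
  (Gp cs i i' k)⁻¹ * cs.simple (awc i i' (k + 1)) * Gp cs i i' k

theorem fent_succ (i i' : B) (k : ℕ) :
    fent cs i i' (k + 1) = fent cs i i' k * uent cs i i' k * fent cs i i' k := by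
  simp only [fent, uent, Gp_succ, awc_add_two, mul_inv_rev, cs.inv_simple]
  group

theorem uent_succ (i i' : B) (k : ℕ) :
    uent cs i i' (k + 1) = fent cs i i' k := by
  simp only [uent, fent, Gp_succ, awc_add_two, mul_inv_rev, cs.inv_simple]
  group
  simp [mul_assoc, cs.simple_mul_simple_cancel_left]

theorem fent_M (i i' : B) : fent cs i i' (M i i') = cs.simple i' := by
  have h1 : Gp cs i i' (M i i' + 1) = Gp cs i i' (M i i') * cs.simple i' := by
    rw [Gp, Gp, alternatingWord_succ, wordProd_concat]
    congr 1
    have := cs.wordProd_braidWord_eq i' i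
    rw [braidWord, braidWord, M.symmetric i' i] at this
    exact this
  have h2 : cs.simple (awc i i' (M i i')) * Gp cs i i' (M i i') =
      Gp cs i i' (M i i') * cs.simple i' := by rw [← Gp_succ, h1]
  rw [fent, mul_assoc, h2, ← mul_assoc, inv_mul_cancel, one_mul]

theorem fent_zero (i i' : B) : fent cs i i' 0 = cs.simple i' := by
  simp [fent, Gp, awc, alternatingWord]

theorem uent_zero (i i' : B) : uent cs i i' 0 = cs.simple i := by
  simp [uent, Gp, awc, alternatingWord]

theorem uent_M (i i' : B) (hm : 0 < M i i') : uent cs i i' (M i i') = cs.simple i := by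
  obtain ⟨m', hm'⟩ : ∃ m', M i i' = m' + 1 := ⟨M i i' - 1, by omega⟩
  rw [hm', uent_succ]
  have key : Gp cs i i' (m' + 1) * cs.simple i = Gp cs i i' m' := by
    rw [Gp, ← wordProd_concat]
    have h3 : (alternatingWord i i' (m' + 1)).concat i = alternatingWord i' i (m' + 2) :=
      (alternatingWord_succ i' i (m' + 1)).symm
    rw [h3, Gp]
    have h4 := cs.prod_alternatingWord_eq_prod_alternatingWord_sub i' i (m' + 2)
      (by rw [← M.symmetric i i']; omega)
    rw [h4, show M i' i * 2 - (m' + 2) = m' from by rw [← M.symmetric i i']; omega]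
  have h5 : cs.simple (awc i i' m') * Gp cs i i' m' = Gp cs i i' (m' + 1) := (Gp_succ ..).symm
  have h6 : Gp cs i i' (m' + 1) = Gp cs i i' m' * cs.simple i := by
    rw [← key, cs.simple_mul_simple_cancel_right]
  rw [fent, mul_assoc, h5, h6, ← mul_assoc, inv_mul_cancel, one_mul]

theorem fent_uent_add (i i' : B) (hm : 0 < M i i') (k : ℕ) :
    fent cs i i' (M i i' + k) = fent cs i i' k ∧ uent cs i i' (M i i' + k) = uent cs i i' k := by
  induction k with
  | zero =>
    rw [Nat.add_zero]
    exact ⟨by rw [fent_M, fent_zero], by rw [uent_M cs i i' hm, uent_zero]⟩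
  | succ k ih =>
    refine ⟨?_, ?_⟩
    · rw [show M i i' + (k + 1) = (M i i' + k) + 1 by omega, fent_succ, fent_succ, ih.1, ih.2]
    · rw [show M i i' + (k + 1) = (M i i' + k) + 1 by omega, uent_succ, uent_succ, ih.1]

theorem drop_alternatingWord (i i' : B) (k n : ℕ) :
    (alternatingWord i i' n).drop k = alternatingWord i i' (n - k) := by
  induction k generalizing n with
  | zero => simp
  | succ k ih =>
    cases n with
    | zero => simp [alternatingWord]
    | succ n =>
      rw [alternatingWord_succ_cons, List.drop_succ_cons, ih n]
      congr 1
      omega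

theorem get?_alternatingWord (i i' : B) (n j : ℕ) (hj : j < n) :
    (alternatingWord i i' n)[j]? = some (awc i i' (n - 1 - j)) := by
  have h1 : (alternatingWord i i' n)[j]? = ((alternatingWord i i' n).drop j)[0]? := by
    rw [List.getElem?_drop, Nat.add_zero]
  rw [h1, drop_alternatingWord, show n - j = (n - 1 - j) + 1 by omega, alternatingWord_succ_cons]
  rfl

theorem getD_ris_alternatingWord (i i' : B) (n j : ℕ) (hj : j < n) :
    (cs.rightInvSeq (alternatingWord i i' n)).getD j 1 = fent cs i i' (n - 1 - j) := by
  rw [cs.getD_rightInvSeq, drop_alternatingWord, get?_alternatingWord i i' n j hj]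
  rw [show n - (j + 1) = n - 1 - j by omega]
  rfl

open Classical in
noncomputable def eta (i : B) : Function.End (W × ℤˣ) :=
  fun p => (cs.simple i * p.1 * cs.simple i, if p.1 = cs.simple i then -p.2 else p.2)

open Classical in
noncomputable def sgn (t : W) (l : List W) : ℤˣ :=
  (l.map (fun u => if u = t then (-1 : ℤˣ) else 1)).prod

theorem sgn_nil (t : W) : sgn t [] = 1 := by simp [sgn]

open Classical in
theorem sgn_cons (t u : W) (l : List W) :
    sgn t (u :: l) = (if u = t then (-1 : ℤˣ) else 1) * sgn t l := by
  simp [sgn]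

theorem sgn_append (t : W) (l1 l2 : List W) :
    sgn t (l1 ++ l2) = sgn t l1 * sgn t l2 := by
  simp [sgn]

theorem sgn_eq_one_of_not_mem {t : W} {l : List W} (h : t ∉ l) : sgn t l = 1 := by
  apply List.prod_eq_one
  intro x hx
  obtain ⟨u, hu, rfl⟩ := List.mem_map.mp hx
  rw [if_neg]
  rintro rfl
  exact h hu

theorem prod_map_eta (ω : List B) (t : W) (ε : ℤˣ) :
    ((ω.map (eta cs)).prod : Function.End (W × ℤˣ)) (t, ε) =
      (cs.wordProd ω * t * (cs.wordProd ω)⁻¹, ε * sgn t (cs.rightInvSeq ω)) := by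
  classical
  induction ω with
  | nil =>
    simp only [List.map_nil, List.prod_nil, rightInvSeq_nil, sgn_nil, mul_one, wordProd_nil,
      one_mul, inv_one]
    rfl
  | cons a ω ih =>
    rw [List.map_cons, List.prod_cons]
    have happ : ∀ (f g : Function.End (W × ℤˣ)) (x : W × ℤˣ), (f * g) x = f (g x) := fun _ _ _ => rfl
    rw [happ, ih]
    have hris : cs.rightInvSeq (a :: ω) =
        ((cs.wordProd ω)⁻¹ * cs.simple a * cs.wordProd ω) :: cs.rightInvSeq ω := rfl
    rw [hris, sgn_cons]
    rw [eta]
    simp only []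
    have hcond : (cs.wordProd ω * t * (cs.wordProd ω)⁻¹ = cs.simple a) ↔
        ((cs.wordProd ω)⁻¹ * cs.simple a * cs.wordProd ω = t) := by
      constructor
      · intro h; rw [← h]; group
      · intro h; rw [← h]; group
    rw [Prod.mk.injEq]
    constructor
    · rw [wordProd_cons, mul_inv_rev, cs.inv_simple]
      group
    · by_cases h : (cs.wordProd ω)⁻¹ * cs.simple a * cs.wordProd ω = t
      · rw [if_pos (hcond.mpr h), if_pos h, neg_one_mul, mul_neg]
      · rw [if_neg (fun hc => h (hcond.mp hc)), if_neg h, one_mul]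

theorem prod_map_eta_alt (i i' : B) (n : ℕ) :
    ((alternatingWord i i' (2 * n)).map (eta cs)).prod = (eta cs i * eta cs i') ^ n := by
  induction n with
  | zero => simp [alternatingWord]
  | succ n ih =>
    have h2 : 2 * (n + 1) = (2 * n + 1) + 1 := by omega
    rw [h2, alternatingWord_succ_cons, alternatingWord_succ_cons]
    have ha : awc i i' (2 * n + 1) = i := by simp [awc, Nat.even_add_one, Nat.even_mul]
    have hb : awc i i' (2 * n) = i' := by simp [awc, Nat.even_mul]
    rw [ha, hb, List.map_cons, List.map_cons, List.prod_cons, List.prod_cons, ih,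
      pow_succ', mul_assoc]

theorem eta_liftable : M.IsLiftable (eta cs) := by
  intro i i'
  rcases Nat.eq_zero_or_pos (M i i') with h0 | hm
  · rw [h0, pow_zero]
  · rw [← prod_map_eta_alt]
    funext p
    obtain ⟨t, ε⟩ := p
    rw [prod_map_eta]
    have hπ : cs.wordProd (alternatingWord i i' (2 * M i i')) = 1 := by
      rw [cs.prod_alternatingWord_eq_mul_pow]
      simp [Nat.even_mul, show (2 * M i i') / 2 = M i i' from by omega,
        cs.simple_mul_simple_pow i i']
    have hlenR : (cs.rightInvSeq (alternatingWord i i' (2 * M i i'))).length = 2 * M i i' := by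
      rw [cs.length_rightInvSeq, length_alternatingWord]
    set R := cs.rightInvSeq (alternatingWord i i' (2 * M i i')) with hR
    have hdt : R.drop (M i i') = R.take (M i i') := by
      apply List.ext_getElem
      · rw [List.length_drop, List.length_take]; omega
      · intro j h1 h2
        rw [List.getElem_drop, List.getElem_take]
        have hj : j < M i i' := by rw [List.length_take] at h2; omega
        rw [← List.getD_eq_getElem R 1, ← List.getD_eq_getElem R 1, hR,
          getD_ris_alternatingWord cs i i' _ _ (by omega),
          getD_ris_alternatingWord cs i i' _ _ (by omega)]
        rw [show 2 * M i i' - 1 - j = M i i' + (M i i' - 1 - j) by omega,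
          show 2 * M i i' - 1 - (M i i' + j) = M i i' - 1 - j by omega]
        exact ((fent_uent_add cs i i' hm _).1).symm
    have hsplit : R = R.take (M i i') ++ R.take (M i i') := by
      conv_lhs => rw [← List.take_append_drop (M i i') R]
      rw [hdt]
    rw [hπ, hsplit, sgn_append]
    have : sgn t (R.take (M i i')) * sgn t (R.take (M i i')) = 1 := Int.units_mul_self _
    rw [this, mul_one]
    show _ = (t, ε)
    simp

noncomputable def Phi : W →* Function.End (W × ℤˣ) := cs.lift ⟨eta cs, eta_liftable cs⟩

theorem Phi_simple (i : B) : Phi cs (cs.simple i) = eta cs i :=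
  cs.lift_apply_simple (eta_liftable cs) i

theorem Phi_wordProd (ω : List B) (t : W) (ε : ℤˣ) :
    Phi cs (cs.wordProd ω) (t, ε) =
      (cs.wordProd ω * t * (cs.wordProd ω)⁻¹, ε * sgn t (cs.rightInvSeq ω)) := by
  have h1 : Phi cs (cs.wordProd ω) = ((ω.map (eta cs)).prod : Function.End (W × ℤˣ)) := by
    rw [wordProd, map_list_prod, List.map_map]
    exact congrArg List.prod (List.map_congr_left fun i _ => Phi_simple cs i)
  rw [h1, prod_map_eta]


theorem right_exchange' {ω : List B} {k : B} {w : W} (hπ : cs.wordProd ω = w)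
    (hl : cs.length (w * cs.simple k) < cs.length w) :
    ∃ l1 a l2, ω = l1 ++ a :: l2 ∧ w * cs.simple k = cs.wordProd (l1 ++ l2) := by
  have hmem : cs.simple k ∈ cs.rightInvSeq ω := by
    by_contra hmem
    have h1 : sgn (cs.simple k) (cs.rightInvSeq ω) = 1 := sgn_eq_one_of_not_mem hmem
    have h2 : (Phi cs w (cs.simple k, 1)).2 = 1 := by
      rw [← hπ, Phi_wordProd, h1, mul_one]
    obtain ⟨ωu, hu1, hu2⟩ := cs.exists_reduced_word' (w * cs.simple k)
    have hw : (w * cs.simple k) * cs.simple k = w := cs.simple_mul_simple_cancel_right k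
    have h4 : Phi cs (cs.simple k) ((cs.simple k : W), (1 : ℤˣ)) = (cs.simple k, -1) := by
      rw [Phi_simple, eta]
      simp [cs.simple_mul_simple_cancel_right]
    have h5 : Phi cs w ((cs.simple k : W), (1:ℤˣ)) =
        Phi cs (w * cs.simple k) ((cs.simple k : W), (-1:ℤˣ)) := by
      conv_lhs => rw [← hw, map_mul]
      show Phi cs (w * cs.simple k) (Phi cs (cs.simple k) ((cs.simple k : W), (1:ℤˣ))) = _
      rw [h4]
    have h6 : sgn (cs.simple k) (cs.rightInvSeq ωu) = 1 := by
      by_contra h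
      have hmem2 : cs.simple k ∈ cs.rightInvSeq ωu := by
        by_contra h'
        exact h (sgn_eq_one_of_not_mem h')
      have h7 := (cs.isRightInversion_of_mem_rightInvSeq hu1 hmem2).2
      rw [← hu2, hw] at h7
      omega
    have h8 : (Phi cs w ((cs.simple k : W), (1:ℤˣ))).2 = -1 := by
      rw [h5, hu2, Phi_wordProd, h6]
      simp
    rw [h2] at h8
    exact absurd h8.symm (by decide)
  obtain ⟨jj, hjR, hgj⟩ := List.mem_iff_getElem.mp hmem
  have hj : jj < ω.length := by rwa [cs.length_rightInvSeq] at hjR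
  have hg : (cs.rightInvSeq ω).getD jj 1 = cs.simple k := by
    rw [List.getD_eq_getElem _ 1 hjR]
    exact hgj
  have h8 : w * cs.simple k = cs.wordProd (ω.eraseIdx jj) := by
    rw [← hπ, ← cs.wordProd_mul_getD_rightInvSeq ω jj, hg]
  refine ⟨ω.take jj, ω[jj], ω.drop (jj + 1), ?_, ?_⟩
  · conv_lhs => rw [← List.take_append_drop jj ω, List.drop_eq_getElem_cons hj]
  · rw [h8, List.eraseIdx_eq_take_drop_succ]

theorem left_exchange' {ω : List B} {k : B} {w : W} (hπ : cs.wordProd ω = w)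
    (hl : cs.length (cs.simple k * w) < cs.length w) :
    ∃ l1 a l2, ω = l1 ++ a :: l2 ∧ cs.simple k * w = cs.wordProd (l1 ++ l2) := by
  have hπ' : cs.wordProd ω.reverse = w⁻¹ := by rw [wordProd_reverse, hπ]
  have hinv : w⁻¹ * cs.simple k = (cs.simple k * w)⁻¹ := by
    rw [mul_inv_rev, cs.inv_simple]
  have hl' : cs.length (w⁻¹ * cs.simple k) < cs.length w⁻¹ := by
    rw [hinv, cs.length_inv, cs.length_inv]
    exact hl
  obtain ⟨l1, a, l2, h1, h2⟩ := right_exchange' cs hπ' hl'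
  refine ⟨l2.reverse, a, l1.reverse, ?_, ?_⟩
  · have h3 := congrArg List.reverse h1
    rw [List.reverse_reverse] at h3
    rw [h3]
    simp
  · have h4 : cs.simple k * w = (w⁻¹ * cs.simple k)⁻¹ := by
      rw [hinv, inv_inv]
    rw [h4, h2, ← wordProd_reverse]
    congr 1
    simp

end StrongExchangeAux

open CoxeterSystem List


/-- If `w` has full support and for every left descent `s` of `w`, multiplying by `s`
on the left removes `s` from the support (`Supp(sw) = S \ {s}`), then any two left
descents of `w` commute. -/
theorem stmt_3 {B W : Type*} [Group W] {M : CoxeterMatrix B}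
    (cs : CoxeterSystem M W) (w : W)
    (hfull : cs.supp w = Set.univ)
    (hlose : ∀ i : B, cs.IsLeftDescent w i →
      cs.supp (cs.simple i * w) = Set.univ \ {i})
    (i j : B) (hi : cs.IsLeftDescent w i) (hj : cs.IsLeftDescent w j) :
    Commute (cs.simple i) (cs.simple j) := by
  rcases eq_or_ne i j with rfl | hne
  · exact Commute.refl _
  have hi' : cs.length (cs.simple i * w) + 1 = cs.length w := cs.isLeftDescent_iff.mp hi
  have hj' : cs.length (cs.simple j * w) + 1 = cs.length w := cs.isLeftDescent_iff.mp hj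
  obtain ⟨ω, hωr, hωp⟩ := cs.exists_reduced_word' (cs.simple i * w)
  have hωlen : ω.length = cs.length (cs.simple i * w) := by
    have := hωr
    rw [CoxeterSystem.IsReduced, ← hωp] at this
    omega
  have hiωp : cs.wordProd (i :: ω) = w := by
    rw [wordProd_cons, ← hωp, cs.simple_mul_simple_cancel_left]
  obtain ⟨l1, a, l2, he1, he2⟩ := StrongExchangeAux.left_exchange' cs hiωp hj
  cases l1 with
  | nil =>
    rw [List.nil_append] at he1 he2
    injection he1 with h1 h2
    subst h1; subst h2
    -- he2 : s j * w = π ω = s i * w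
    have h3 : cs.simple j = cs.simple i := by
      have := he2.trans hωp.symm
      exact mul_right_cancel this
    rw [h3]
  | cons b l1' =>
    rw [List.cons_append] at he1
    injection he1 with h1 h2
    subst h1
    -- he2 : s j * w = π ((i :: l1') ++ l2) = s i * π (l1' ++ l2)
    have he2' : cs.simple j * w = cs.simple i * cs.wordProd (l1' ++ l2) := by
      rw [he2, List.cons_append, wordProd_cons]
    have hv : cs.simple i * (cs.simple j * w) = cs.wordProd (l1' ++ l2) := by
      rw [he2', cs.simple_mul_simple_cancel_left]
    have hlenv : cs.length (cs.wordProd (l1' ++ l2)) + 2 ≤ cs.length w := by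
      have h4 := cs.length_wordProd_le (l1' ++ l2)
      have h5 : ω.length = l1'.length + (l2.length + 1) := by
        rw [h2]; simp
      rw [List.length_append] at h4
      omega
    have hdesc2 : cs.IsLeftDescent (cs.simple j * w) i := by
      show cs.length (cs.simple i * (cs.simple j * w)) < cs.length (cs.simple j * w)
      rw [hv]
      omega
    have hv2 : cs.length (cs.simple i * (cs.simple j * w)) + 2 = cs.length w := by
      have h6 := cs.isLeftDescent_iff.mp hdesc2
      omega
    obtain ⟨τ, hτr, hτp⟩ := cs.exists_reduced_word' (cs.simple i * (cs.simple j * w))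
    have hτlen : τ.length + 2 = cs.length w := by
      have := hτr
      rw [CoxeterSystem.IsReduced, ← hτp] at this
      omega
    have hjiτ : cs.wordProd (j :: i :: τ) = w := by
      rw [wordProd_cons, wordProd_cons, ← hτp, cs.simple_mul_simple_cancel_left,
        cs.simple_mul_simple_cancel_left]
    obtain ⟨p1, c, p2, hq1, hq2⟩ := StrongExchangeAux.left_exchange' cs hjiτ hi
    cases p1 with
    | nil =>
      rw [List.nil_append] at hq1 hq2
      injection hq1 with r1 r2
      subst r1; subst r2
      -- hq2 : s i * w = π (i :: τ) = s i * π τ = s j * w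
      have h7 : cs.simple i * w = cs.simple j * w := by
        rw [hq2, wordProd_cons, ← hτp, cs.simple_mul_simple_cancel_left]
      have h8 : cs.simple i = cs.simple j := mul_right_cancel h7
      rw [h8]
    | cons b1 p1' =>
      rw [List.cons_append] at hq1
      injection hq1 with r1 r2
      subst r1
      cases p1' with
      | nil =>
        rw [List.nil_append] at r2
        injection r2 with r3 r4
        subst r3; subst r4
        -- hq2 : s i * w = π ([j] ++ τ) = s j * π τ = s j * (s i * (s j * w))
        have h9 : cs.simple i * w = cs.simple j * (cs.simple i * (cs.simple j * w)) := by
          rw [hq2, List.cons_append, List.nil_append, wordProd_cons, hτp]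
        have h10 : cs.simple i = cs.simple j * cs.simple i * cs.simple j := by
          have : cs.simple i * w = ((cs.simple j * cs.simple i * cs.simple j) * w) := by
            rw [h9]; group
          exact mul_right_cancel this
        show cs.simple i * cs.simple j = cs.simple j * cs.simple i
        conv_lhs => rw [h10]
        rw [cs.simple_mul_simple_cancel_right]
      | cons b2 p1'' =>
        rw [List.cons_append] at r2
        injection r2 with r3 r4
        subst r3
        -- r4 : τ = p1'' ++ c :: p2 ; hq2 : s i * w = π ((j :: i :: p1'') ++ p2)
        exfalso
        have hword : cs.wordProd (j :: i :: (p1'' ++ p2)) = cs.simple i * w := hq2.symm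
        have hlw : (j :: i :: (p1'' ++ p2)).length = cs.length (cs.simple i * w) := by
          have h11 : τ.length = p1''.length + (p2.length + 1) := by rw [r4]; simp
          simp only [List.length_cons, List.length_append]
          omega
        have hred : cs.IsReduced (j :: i :: (p1'' ++ p2)) := by
          rw [CoxeterSystem.IsReduced, hword, hlw]
        have hmem : i ∈ cs.supp (cs.simple i * w) :=
          ⟨j :: i :: (p1'' ++ p2), hred, hword, by simp⟩
        rw [hlose i hi] at hmem
        simp at hmem
end

section
/- Let W be the Weyl group of a reduced irreducible root system of rank at least 2, and let w be a Coxeter element of W. Then no simple reflection commutes with w; i.e., the set of commuting descents of w is empty. Equivalently, w(α_j) ≠ ±α_j for every simple root α_j. -/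
/-!
Let `W` act on `ℝ^B` by its geometric representation, `s_j` being the reflection in the simple
root `α_j` for the Tits form `⟨α_j, α_k⟩ = -cos (π / m_jk)`. If `s_i` commutes with the Coxeter
element `w`, then `w α_i` is a `(-1)`-eigenvector of `s_i`, hence a multiple of `α_i`. Computing
`w α_i` letter by letter, from the right, the letter `s_j` (`j ≠ i`) is the only one that changes
the `α_j`-coordinate, and it changes it by `-2 ⟨α_j, α_i⟩` times a unit; so every such pairing
vanishes, i.e. `M i j = 2` for all `j ≠ i`, contradicting connectedness of the Coxeter graph.
-/

open Polynomial.Chebyshev Real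

theorem Polynomial.Chebyshev.S_eval_two_mul_cos_eq_zero {θ : ℝ} (hθ : sin θ ≠ 0) {n : ℤ}
    (h : sin ((n + 1) * θ) = 0) : (S ℝ n).eval (2 * cos θ) = 0 := by
  have := S_two_mul_real_cos θ n
  rw [h] at this
  exact (mul_eq_zero.mp this).resolve_right hθ

namespace Module

variable {M : Type*} [AddCommGroup M] [Module ℝ M] {x y : M} {f g : Dual ℝ M}

/-- With `θ = 2π / m` we have `f y * g x - 2 = 2 cos θ`, and the Chebyshev coefficients in
`reflection_mul_reflection_pow_apply` vanish since `S_k(2 cos θ) sin θ = sin ((k + 1) θ)`. -/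
theorem reflection_mul_reflection_pow_eq_one (hf : f x = 2) (hg : g y = 2) {m : ℕ} (hm : 3 ≤ m)
    (h : f y * g x = 4 * cos (π / m) ^ 2) : (reflection hf * reflection hg) ^ m = 1 := by
  set θ := 2 * (π / m) with hθ
  have ht : 2 * cos θ = f y * g x - 2 := by rw [h, hθ, cos_two_mul]; ring
  have hsin : sin θ ≠ 0 := by
    have hm' : (3 : ℝ) ≤ m := by exact_mod_cast hm
    refine (sin_pos_of_pos_of_lt_pi (by positivity) ?_).ne'
    rw [show θ = π * (2 / m) by rw [hθ]; ring]
    exact mul_lt_of_lt_one_right pi_pos (by rw [div_lt_one (by linarith)]; linarith)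
  have hmθ : (m : ℝ) * θ = 2 * π := by
    have : (m : ℝ) ≠ 0 := by positivity
    rw [hθ]
    field_simp
  ext z
  rw [reflection_mul_reflection_pow_apply hf hg m z _ ht]
  obtain ⟨k, rfl | rfl⟩ := Nat.even_or_odd' m
  · have hk : (S ℝ (k - 1)).eval (2 * cos θ) = 0 := by
      refine S_eval_two_mul_cos_eq_zero hsin ?_
      push_cast at hmθ
      rw [show ((k - 1 : ℤ) : ℝ) + 1 = k by push_cast; ring]
      rw [show (k : ℝ) * θ = π by linarith, sin_pi]
    rw [show ((2 * k : ℕ) - 2 : ℤ) / 2 = k - 1 by omega,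
      show ((2 * k : ℕ) - 1 : ℤ) / 2 = k - 1 by omega, hk]
    simp
  · have hk : (S ℝ k).eval (2 * cos θ) + (S ℝ (k - 1)).eval (2 * cos θ) = 0 := by
      refine (mul_eq_zero.mp ?_).resolve_right hsin
      rw [add_mul, S_two_mul_real_cos, S_two_mul_real_cos]
      push_cast at hmθ ⊢
      rw [sub_add_cancel, show ((k : ℝ) + 1) * θ = 2 * π - k * θ by linarith, sin_two_pi_sub,
        neg_add_cancel]
    rw [show ((2 * k + 1 : ℕ) - 1 : ℤ) / 2 = k by omega,
      show ((2 * k + 1 : ℕ) - 3 : ℤ) / 2 = k - 1 by omega,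
      show ((2 * k + 1 : ℕ) : ℤ) / 2 = k by omega,
      show ((2 * k + 1 : ℕ) - 2 : ℤ) / 2 = k - 1 by omega, hk]
    simp

theorem reflection_mul_reflection_sq_eq_one {R N : Type*} [CommRing R] [AddCommGroup N]
    [Module R N] {x y : N} {f g : Dual R N} (hf : f x = 2) (hg : g y = 2) (hfy : f y = 0)
    (hgx : g x = 0) : (reflection hf * reflection hg) ^ 2 = 1 := by
  ext z
  simp [sq, reflection_apply, hf, hg, hfy, hgx]
  module

end Module

namespace Matrix

variable {R B : Type*} [CommRing R] [Fintype B] [DecidableEq B] (C : Matrix B B R)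
  (hC : ∀ i, C i i = 2)

/-- If `C` is twice the Gram matrix of a bilinear form on the basis `(Pi.single i 1)ᵢ` of
simple roots, this is the reflection in the `i`-th simple root. -/
noncomputable def rowReflection (i : B) : (B → R) ≃ₗ[R] (B → R) :=
  Module.reflection (f := LinearMap.proj i ∘ₗ C.mulVecLin) (x := Pi.single i 1) (by simp [hC])

theorem rowReflection_apply (i : B) (v : B → R) :
    C.rowReflection hC i v = v - (C *ᵥ v) i • Pi.single i 1 := rfl

theorem rowReflection_apply_of_ne {i k : B} (hk : k ≠ i) (v : B → R) :
    C.rowReflection hC i v k = v k := by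
  simp [rowReflection_apply, hk]

theorem rowReflection_single_self (i : B) :
    C.rowReflection hC i (Pi.single i 1) = -Pi.single i 1 :=
  Module.reflection_apply_self _

theorem rowReflection_single (j i : B) (c : R) :
    C.rowReflection hC j (Pi.single i c) = Pi.single i c - (C j i * c) • Pi.single j 1 := by
  simp [rowReflection_apply, mulVec_single]

theorem eq_zero_of_prod_rowReflection_single_apply_eq_zero {l : List B} (hl : l.Nodup) {i : B}
    (h : ∀ k ∈ l, k ≠ i → (l.map (C.rowReflection hC)).prod (Pi.single i 1) k = 0) :
    (∀ k ∈ l, k ≠ i → C k i = 0) ∧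
      ∃ c, IsUnit c ∧ (l.map (C.rowReflection hC)).prod (Pi.single i 1) = Pi.single i c := by
  induction l with
  | nil => exact ⟨by simp, 1, isUnit_one, by simp⟩
  | cons j t ih =>
    obtain ⟨hjt, ht⟩ := List.nodup_cons.mp hl
    simp only [List.map_cons, List.prod_cons, LinearEquiv.mul_apply] at h ⊢
    have hu : ∀ k ∈ t, k ≠ i → (t.map (C.rowReflection hC)).prod (Pi.single i 1) k = 0 :=
      fun k hk hki => (C.rowReflection_apply_of_ne hC (ne_of_mem_of_not_mem hk hjt) _).symm.trans
        (h k (List.mem_cons_of_mem j hk) hki)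
    obtain ⟨ht0, c, hc, hu⟩ := ih ht hu
    rw [hu] at h ⊢
    by_cases hji : j = i
    · subst hji
      refine ⟨fun k hk hki => ht0 k ((List.mem_cons.mp hk).resolve_left hki) hki, -c, hc.neg, ?_⟩
      ext k
      by_cases hk : k = j <;> simp [rowReflection_single, hC, hk]
      ring
    · have hCji : C j i = 0 := by
        have := h j List.mem_cons_self hji
        rw [rowReflection_single] at this
        simpa [Pi.single_apply, hji, hc.mul_left_eq_zero] using this
      refine ⟨fun k hk hki => ?_, c, hc, by simp [rowReflection_single, hCji]⟩
      rcases List.mem_cons.mp hk with rfl | hk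
      exacts [hCji, ht0 k hk hki]

theorem apply_single_eq_zero_of_commute [IsAddTorsionFree R] {i : B} {g : (B → R) ≃ₗ[R] (B → R)}
    (hg : Commute (C.rowReflection hC i) g) {k : B} (hk : k ≠ i) : g (Pi.single i 1) k = 0 := by
  have := congr($(hg.eq) (Pi.single i 1) k)
  rw [LinearEquiv.mul_apply, LinearEquiv.mul_apply, C.rowReflection_apply_of_ne hC hk,
    C.rowReflection_single_self hC, map_neg, Pi.neg_apply] at this
  exact self_eq_neg.mp this

end Matrix

theorem Real.cos_pi_div_natCast_eq_zero_iff {m : ℕ} : cos (π / m) = 0 ↔ m = 2 := by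
  refine ⟨fun h => ?_, by rintro rfl; simp⟩
  match m with
  | 0 => simp at h
  | 1 => simp at h
  | 2 => rfl
  | m + 3 =>
    have hm : (2 : ℝ) < (m + 3 : ℕ) := by exact_mod_cast (by omega : 2 < m + 3)
    have hpos : 0 < π / (m + 3 : ℕ) := by positivity
    refine absurd h (cos_pos_of_mem_Ioo ⟨by linarith [pi_pos], ?_⟩).ne'
    exact div_lt_div_of_pos_left pi_pos two_pos hm

namespace CoxeterMatrix

variable {B : Type*} (M : CoxeterMatrix B)

/-- Twice the Gram matrix of the Tits form. An entry `M i j = 0` encodes `m_ij = ∞`, and there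
the junk value `π / 0 = 0` gives the correct entry `-2 cos 0 = -2`. -/
noncomputable def cosMatrix : Matrix B B ℝ :=
  Matrix.of fun i j => -2 * cos (π / M i j)

@[simp]
theorem cosMatrix_apply (i j : B) : M.cosMatrix i j = -2 * cos (π / M i j) := rfl

theorem cosMatrix_diag (i : B) : M.cosMatrix i i = 2 := by simp

theorem cosMatrix_eq_zero_iff {i j : B} : M.cosMatrix i j = 0 ↔ M i j = 2 := by
  simp [cos_pi_div_natCast_eq_zero_iff]

theorem isLiftable_rowReflection_cosMatrix [Fintype B] [DecidableEq B] :
    M.IsLiftable (M.cosMatrix.rowReflection M.cosMatrix_diag) := by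
  intro i j
  unfold Matrix.rowReflection
  by_cases hij : i = j
  · subst hij
    rw [M.diagonal, pow_one]
    exact LinearEquiv.ext (Module.involutive_reflection _)
  obtain h0 | h1 | h2 | h3 : M i j = 0 ∨ M i j = 1 ∨ M i j = 2 ∨ 3 ≤ M i j := by omega
  · rw [h0, pow_zero]
  · exact absurd h1 (M.off_diagonal i j hij)
  · rw [h2]
    exact Module.reflection_mul_reflection_sq_eq_one (R := ℝ) _ _ (by simp [h2])
      (by simp [M.symmetric, h2])
  · refine Module.reflection_mul_reflection_pow_eq_one _ _ h3 ?_
    simp [M.symmetric j i]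
    ring

end CoxeterMatrix

namespace CoxeterSystem

variable {B W : Type*} [Fintype B] [DecidableEq B] [Group W] {M : CoxeterMatrix B}
  (cs : CoxeterSystem M W)

noncomputable def geometricRepresentation : W →* (B → ℝ) ≃ₗ[ℝ] (B → ℝ) :=
  cs.lift ⟨_, M.isLiftable_rowReflection_cosMatrix⟩

theorem geometricRepresentation_simple (i : B) :
    cs.geometricRepresentation (cs.simple i) = M.cosMatrix.rowReflection M.cosMatrix_diag i :=
  cs.lift_apply_simple _ i

theorem geometricRepresentation_wordProd (ω : List B) :
    cs.geometricRepresentation (cs.wordProd ω) =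
      (ω.map (M.cosMatrix.rowReflection M.cosMatrix_diag)).prod := by
  rw [wordProd, map_list_prod, List.map_map]
  exact congrArg _ (List.map_congr_left fun i _ => cs.geometricRepresentation_simple i)

end CoxeterSystem

theorem stmt_8_general {B W : Type*} [Group W] [Finite B] {M : CoxeterMatrix B}
    (cs : CoxeterSystem M W)
    (hirr : (SimpleGraph.fromRel (fun i j : B => M i j ≠ 2)).Connected)
    (hrank : 1 < Nat.card B)
    (w : W) (ω : List B)
    (hnd : ω.Nodup) (hall : ∀ i : B, i ∈ ω) (hw : w = cs.wordProd ω) :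
    ∀ i : B, cs.simple i * w ≠ w * cs.simple i := by
  classical
  have := Fintype.ofFinite B
  have := Finite.one_lt_card_iff_nontrivial.mp hrank
  intro i hcomm
  obtain ⟨j, hadj⟩ := hirr.preconnected.exists_adj_of_nontrivial i
  obtain ⟨hij, hMij⟩ := (SimpleGraph.fromRel_adj _ _ _).mp hadj
  have hρ : Commute (M.cosMatrix.rowReflection M.cosMatrix_diag i)
      (cs.geometricRepresentation w) := by
    have := congrArg cs.geometricRepresentation hcomm
    rwa [map_mul, map_mul, cs.geometricRepresentation_simple] at this
  have hwαi : ∀ k ∈ ω, k ≠ i →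
      (ω.map (M.cosMatrix.rowReflection M.cosMatrix_diag)).prod (Pi.single i 1) k = 0 := by
    intro k _ hki
    rw [← cs.geometricRepresentation_wordProd, ← hw]
    exact M.cosMatrix.apply_single_eq_zero_of_commute _ hρ hki
  have hCji := (M.cosMatrix.eq_zero_of_prod_rowReflection_single_apply_eq_zero _ hnd hwαi).1 j
    (hall j) hij.symm
  rw [M.symmetric i j, or_self] at hMij
  exact hMij (M.cosMatrix_eq_zero_iff.mp hCji)

/-- Let `W` be the Weyl group of a reduced irreducible root system of rank at least 2,
presented as a crystallographic Coxeter system with connected Coxeter diagram.  If `w`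
is a Coxeter element (a product of all simple reflections, each occurring once), then
no simple reflection commutes with `w`: the set of commuting descents of `w` is empty. -/
theorem stmt_8 {B W : Type*} [Group W] [Finite B] {M : CoxeterMatrix B}
    (cs : CoxeterSystem M W)
    (hcrys : ∀ i j : B, i ≠ j → M i j ∈ ({2, 3, 4, 6} : Set ℕ))
    (hirr : (SimpleGraph.fromRel (fun i j : B => M i j ≠ 2)).Connected)
    (hrank : 1 < Nat.card B)
    (w : W) (ω : List B)
    (hnd : ω.Nodup) (hall : ∀ i : B, i ∈ ω) (hw : w = cs.wordProd ω) :
    ∀ i : B, cs.simple i * w ≠ w * cs.simple i :=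
  stmt_8_general cs hirr hrank w ω hnd hall hw
end

section
/- Let w ∈ S_n have full support. If for every left descent s of w the support of sw is not all of S, and for every right descent s of w the support of ws is not all of S, then w is a Coxeter element of S_n. -/
/-!
Extend `w` by the identity to a permutation `σ` of `ℕ`. As the length is the number of
inversions, `s_i` is a right descent iff `σ (i + 1) < σ i`, and `s_j ∉ Supp u` iff `u` maps
`{0, …, j}` onto itself. Since `w` has full support, a right descent `s_i` can only lose
support by `Supp (w s_i) = S ∖ {s_i}`, and likewise on the left.

Induct on the largest index `n + 1` moved by `σ`. For `b = σ⁻¹ (n + 1)` and `a = σ (n + 1)`,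
the right descent at `b` forces `b < a` unless `b = n`, and the left descent at `a` forces
`a < b` unless `a = n`. So `s_n` splits off on the right of `σ` or of `σ⁻¹`, and what remains
fixes `n + 1` and inherits the hypotheses. Thus `w` is a product of distinct simple reflections,
all of which occur by full support.
-/

namespace PermCoxeter

open Equiv Finset
open scoped Pointwise

abbrev stabIic (j : ℕ) : Subgroup (Perm ℕ) := MulAction.stabilizer (Perm ℕ) (Set.Iic j)

theorem mem_stabIic {σ : Perm ℕ} {j : ℕ} :
    σ ∈ stabIic j ↔ ∀ x, x ≤ j ↔ σ x ≤ j := by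
  simp only [MulAction.mem_stabilizer_iff, Set.ext_iff, Set.mem_smul_set_iff_inv_smul_mem,
    Perm.smul_def, Set.mem_Iic]
  exact ⟨fun h x => by simpa using h (σ x), fun h y => by simpa using h (σ⁻¹ y)⟩

theorem swap_mem_stabIic {i j : ℕ} (h : i ≠ j) : swap i (i + 1) ∈ stabIic j :=
  mem_stabIic.2 fun x => by rw [swap_apply_def]; split_ifs <;> omega

theorem list_prod_swap_mem_stabIic {l : List ℕ} {j : ℕ} (h : ∀ i ∈ l, i ≠ j) :
    (l.map fun i => swap i (i + 1)).prod ∈ stabIic j :=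
  Subgroup.list_prod_mem _ (by simpa using fun i hi => swap_mem_stabIic (h i hi))

theorem mem_stabIic_of_forall_lt {σ : Perm ℕ} {j : ℕ} (h : ∀ x, j < x → σ x = x) :
    σ ∈ stabIic j := by
  refine mem_stabIic.2 fun x => ⟨fun hx => ?_, fun hx => ?_⟩
  · by_contra hlt
    have := σ.injective (h (σ x) (by omega))
    omega
  · by_contra hlt
    have := h x (by omega)
    omega

theorem swap_apply_lt_swap_apply {i a b : ℕ} (hab : a < b) (h : ¬(a = i ∧ b = i + 1)) :
    swap i (i + 1) a < swap i (i + 1) b := by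
  simp only [swap_apply_def]
  split_ifs <;> omega

theorem mem_stabIic_of_mul_swap_mem {σ : Perm ℕ} {i j : ℕ} (hσ : σ ∉ stabIic j)
    (h : σ * swap i (i + 1) ∈ stabIic j) : σ * swap i (i + 1) ∈ stabIic i := by
  obtain rfl : j = i := by
    by_contra hne
    exact hσ (by simpa using (stabIic j).mul_mem h (swap_mem_stabIic (Ne.symm hne)))
  exact h

def DescentsSplit (σ : Perm ℕ) (n : ℕ) : Prop :=
  ∀ i < n, σ (i + 1) < σ i → σ * swap i (i + 1) ∈ stabIic i

/-- For `σ = toPermNat w`, `σ ∈ stabIic j` says `s_j ∉ Supp w`; the fields are then the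
hypotheses of `stmt_10`, with `Supp (w s_i) ≠ S` sharpened to `s_i ∉ Supp (w s_i)`. -/
structure SupportCritical (σ : Perm ℕ) (n : ℕ) : Prop where
  apply_eq : ∀ x, n < x → σ x = x
  notMem : ∀ j < n, σ ∉ stabIic j
  right : DescentsSplit σ n
  left : DescentsSplit σ⁻¹ n

namespace SupportCritical

variable {σ : Perm ℕ} {n : ℕ}

theorem inv (h : SupportCritical σ n) : SupportCritical σ⁻¹ n where
  apply_eq x hx := by rw [Perm.inv_eq_iff_eq, h.apply_eq x hx]
  notMem j hj hσ := h.notMem j hj (by simpa using (stabIic j).inv_mem hσ)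
  right := h.left
  left := by simpa using h.right

theorem apply_succ_lt (h : SupportCritical σ (n + 1)) : σ (n + 1) < n + 1 := by
  have hle := (mem_stabIic.1 (mem_stabIic_of_forall_lt h.apply_eq) (n + 1)).1 le_rfl
  have hne : σ (n + 1) ≠ n + 1 := fun hfix => h.notMem n (by omega) <|
    mem_stabIic_of_forall_lt fun x hx => by
      obtain rfl | hx := (show x = n + 1 ∨ n + 1 < x by omega)
      exacts [hfix, h.apply_eq x hx]
  omega

theorem inv_apply_lt_apply (h : SupportCritical σ (n + 1)) (hb : σ⁻¹ (n + 1) < n) :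
    σ⁻¹ (n + 1) < σ (n + 1) := by
  set b := σ⁻¹ (n + 1)
  have hσb : σ b = n + 1 := by simp [b]
  have hle := mem_stabIic.1 (mem_stabIic_of_forall_lt h.apply_eq) (b + 1)
  have hne : σ (b + 1) ≠ n + 1 := fun he => by
    have := σ.injective (he.trans hσb.symm)
    omega
  have hsplit := mem_stabIic.1 (h.right b (by omega) (by omega)) (n + 1)
  rw [Perm.mul_apply, swap_apply_of_ne_of_ne (by omega) (by omega)] at hsplit
  omega

theorem apply_eq_or_inv_apply_eq (h : SupportCritical σ (n + 1)) :
    σ n = n + 1 ∨ σ⁻¹ n = n + 1 := by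
  have ha := h.apply_succ_lt
  have hb := h.inv.apply_succ_lt
  have hab := h.inv_apply_lt_apply
  have hba := h.inv.inv_apply_lt_apply
  rw [inv_inv] at hba
  rw [Perm.inv_eq_iff_eq, ← Perm.eq_inv_iff_eq]
  omega

theorem apply_eq_of_descent (h : SupportCritical σ (n + 2)) (hσ : σ (n + 1) = n + 2)
    (hdesc : σ (n + 2) < σ n) : σ n = n + 1 := by
  have hstab := mem_stabIic.1 (mem_stabIic_of_forall_lt h.apply_eq)
  have hstab' := mem_stabIic.1 (mem_stabIic_of_forall_lt h.inv.apply_eq)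
  have hne : σ n ≠ n + 2 := fun he => by
    have := σ.injective (he.trans hσ.symm)
    omega
  have hle := (hstab n).1 (by omega)
  by_contra hc
  set q := σ⁻¹ (σ n + 1)
  have hq : σ q = σ n + 1 := by simp [q]
  have hqle : q ≤ n + 2 := (hstab' (σ n + 1)).1 (by omega)
  have hqlt : q < n := by
    obtain hlt | he | he | he : q < n ∨ q = n ∨ q = n + 1 ∨ q = n + 2 := by omega
    · exact hlt
    all_goals rw [he] at hq; omega
  have hinv : ∀ x, σ⁻¹ (σ x) = x := fun x => Perm.inv_eq_iff_eq.2 rfl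
  have hsplit := mem_stabIic.1 (h.left (σ n) (by omega) (by rwa [hinv])) (σ (n + 2))
  rw [Perm.mul_apply, swap_apply_of_ne_of_ne (by omega) (by omega), hinv] at hsplit
  omega

theorem apply_mul_swap_of_lt (h : SupportCritical σ (n + 1)) (hn : σ n = n + 1) {x : ℕ}
    (hx : n < x) : (σ * swap n (n + 1)) x = x := by
  obtain rfl | hx := (show x = n + 1 ∨ n + 1 < x by omega)
  · simpa using hn
  · rw [Perm.mul_apply, swap_apply_of_ne_of_ne (by omega) (by omega), h.apply_eq x hx]

theorem descentsSplit_mul_swap (h : SupportCritical σ (n + 1)) (hn : σ n = n + 1) :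
    DescentsSplit (σ * swap n (n + 1)) n := by
  intro i hi hdesc
  obtain hi | rfl := (show i + 1 < n ∨ n = i + 1 by omega)
  · simp only [Perm.mul_apply, swap_apply_of_ne_of_ne (a := n) (by omega : i ≠ n)
      (by omega : i ≠ n + 1), swap_apply_of_ne_of_ne (a := n) (by omega : i + 1 ≠ n)
      (by omega : i + 1 ≠ n + 1)] at hdesc
    rw [mul_assoc, ((Perm.disjoint_swap_swap (by simp; omega)).commute).eq, ← mul_assoc]
    exact (stabIic i).mul_mem (h.right i (by omega) hdesc) (swap_mem_stabIic (by omega))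
  · refine mem_stabIic_of_forall_lt fun x hx => ?_
    obtain rfl | hx := (show x = i + 1 ∨ i + 1 < x by omega)
    · simp only [Perm.mul_apply, swap_apply_right, swap_apply_left,
        swap_apply_of_ne_of_ne (a := i + 1) (by omega : i ≠ i + 1) (by omega : i ≠ i + 2)]
        at hdesc ⊢
      exact h.apply_eq_of_descent hn hdesc
    · rw [Perm.mul_apply, swap_apply_of_ne_of_ne (by omega) (by omega),
        h.apply_mul_swap_of_lt hn hx]

theorem descentsSplit_inv_mul_swap (h : SupportCritical σ (n + 1)) (hn : σ n = n + 1) :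
    DescentsSplit (σ * swap n (n + 1))⁻¹ n := by
  intro i hi hdesc
  have hinv : (σ * swap n (n + 1))⁻¹ = swap n (n + 1) * σ⁻¹ := by simp
  rw [hinv] at hdesc ⊢
  have hdescσ : σ⁻¹ (i + 1) < σ⁻¹ i := by
    by_contra hasc
    have hne : σ⁻¹ i ≠ σ⁻¹ (i + 1) := fun he => by
      have := σ⁻¹.injective he
      omega
    have hni : σ⁻¹ i ≠ n := fun he => by
      rw [Perm.inv_eq_iff_eq] at he
      omega
    have := swap_apply_lt_swap_apply (i := n) (show σ⁻¹ i < σ⁻¹ (i + 1) by omega) (by omega)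
    simp only [Perm.mul_apply] at hdesc
    omega
  rw [mul_assoc]
  exact (stabIic i).mul_mem (swap_mem_stabIic (by omega)) (h.left i (by omega) hdescσ)

theorem mul_swap (h : SupportCritical σ (n + 1)) (hn : σ n = n + 1) :
    SupportCritical (σ * swap n (n + 1)) n where
  apply_eq _ := h.apply_mul_swap_of_lt hn
  notMem j hj hτ := h.notMem j (by omega) (by
    simpa using (stabIic j).mul_mem hτ (swap_mem_stabIic (i := n) (by omega)))
  right := h.descentsSplit_mul_swap hn
  left := h.descentsSplit_inv_mul_swap hn

end SupportCritical

def IsProdDistinctAdjSwaps (σ : Perm ℕ) (n : ℕ) : Prop :=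
  ∃ l : List ℕ, l.Nodup ∧ (∀ i ∈ l, i < n) ∧ (l.map fun i => swap i (i + 1)).prod = σ

namespace IsProdDistinctAdjSwaps

variable {σ : Perm ℕ} {n : ℕ}

theorem inv (h : IsProdDistinctAdjSwaps σ n) : IsProdDistinctAdjSwaps σ⁻¹ n := by
  obtain ⟨l, hnd, hlt, rfl⟩ := h
  refine ⟨l.reverse, List.nodup_reverse.2 hnd, by simpa using hlt, ?_⟩
  simp [List.prod_inv_reverse, List.map_reverse, Function.comp_def]

theorem mul_swap (h : IsProdDistinctAdjSwaps σ n) :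
    IsProdDistinctAdjSwaps (σ * swap n (n + 1)) (n + 1) := by
  obtain ⟨l, hnd, hlt, rfl⟩ := h
  refine ⟨l ++ [n], ?_, ?_, by simp⟩
  · simpa [List.nodup_append] using ⟨hnd, fun i hi => (hlt i hi).ne⟩
  · intro i hi
    rcases List.mem_append.1 hi with hi | hi
    · exact (hlt i hi).trans n.lt_succ_self
    · simp [List.mem_singleton.1 hi]

end IsProdDistinctAdjSwaps

theorem SupportCritical.isProdDistinctAdjSwaps {σ : Perm ℕ} {n : ℕ}
    (h : SupportCritical σ n) : IsProdDistinctAdjSwaps σ n := by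
  induction n generalizing σ with
  | zero =>
    have hσ : σ = 1 := Perm.ext fun x => by
      obtain rfl | hx := Nat.eq_zero_or_pos x
      · exact Nat.le_zero.1 ((mem_stabIic.1 (mem_stabIic_of_forall_lt h.apply_eq) 0).1 le_rfl)
      · exact h.apply_eq x hx
    exact ⟨[], List.nodup_nil, by simp, by simp [hσ]⟩
  | succ n ih =>
    rcases h.apply_eq_or_inv_apply_eq with hn | hn
    · simpa using (ih (h.mul_swap hn)).mul_swap
    · simpa using (ih (h.inv.mul_swap hn)).mul_swap.inv

def inversions (σ : Perm ℕ) (n : ℕ) : Finset (ℕ × ℕ) :=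
  (range n ×ˢ range n).filter fun p => p.1 < p.2 ∧ σ p.2 < σ p.1

@[simp]
theorem mem_inversions {σ : Perm ℕ} {n : ℕ} {p : ℕ × ℕ} :
    p ∈ inversions σ n ↔ (p.1 < n ∧ p.2 < n) ∧ p.1 < p.2 ∧ σ p.2 < σ p.1 := by
  simp [inversions]

theorem card_inversions_mul_swap {σ : Perm ℕ} {n i : ℕ} (hi : i + 1 < n)
    (hasc : σ i < σ (i + 1)) :
    #(inversions (σ * swap i (i + 1)) n) = #(inversions σ n) + 1 := by
  set s := swap i (i + 1)
  have hrange : ∀ x, x < n ↔ s x < n := fun x => by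
    simp only [s, swap_apply_def]
    split_ifs <;> omega
  have hset : inversions (σ * s) n =
      insert (i, i + 1) ((inversions σ n).map (prodCongr s s).toEmbedding) := by
    ext ⟨a, b⟩
    simp only [mem_insert, mem_map_equiv, mem_inversions,
      prodCongr_symm, prodCongr_apply, Prod.map, Prod.mk.injEq, Perm.mul_apply, s, symm_swap]
    by_cases he : a = i ∧ b = i + 1
    · obtain ⟨rfl, rfl⟩ := he
      simp [hasc, hi, (show a < n by omega)]
    by_cases he' : a = i + 1 ∧ b = i
    · obtain ⟨rfl, rfl⟩ := he'
      simp [hasc.not_gt]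
    have hlt : a < b ↔ s a < s b := by
      refine ⟨fun hab => swap_apply_lt_swap_apply hab he, fun hab => ?_⟩
      by_contra hba
      obtain rfl | hba := (show a = b ∨ b < a by omega)
      · exact lt_irrefl _ hab
      · exact (swap_apply_lt_swap_apply hba fun h => he' ⟨h.2, h.1⟩).not_gt hab
    rw [hrange a, hrange b, hlt]
    simp [he, s]
  rw [hset, card_insert_of_notMem, card_map]
  simp [s]

theorem card_inversions_mul_swap_add_one {σ : Perm ℕ} {n i : ℕ} (hi : i + 1 < n)
    (hdesc : σ (i + 1) < σ i) :
    #(inversions (σ * swap i (i + 1)) n) + 1 = #(inversions σ n) := by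
  have := card_inversions_mul_swap (σ := σ * swap i (i + 1)) hi (by simpa using hdesc)
  rw [mul_swap_mul_self] at this
  exact this.symm

variable {m : ℕ}

def toPermNat : Perm (Fin (m + 1)) →* Perm ℕ := Perm.extendDomainHom Fin.equivSubtype

theorem toPermNat_injective : Function.Injective (toPermNat (m := m)) :=
  Perm.extendDomainHom_injective _

theorem toPermNat_apply_coe (v : Perm (Fin (m + 1))) (x : Fin (m + 1)) :
    toPermNat v x = v x :=
  Perm.extendDomain_apply_image v Fin.equivSubtype x

theorem toPermNat_apply_of_lt (v : Perm (Fin (m + 1))) {x : ℕ} (hx : m < x) :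
    toPermNat v x = x :=
  Perm.extendDomain_apply_not_subtype _ _ (by omega)

theorem toPermNat_swap (i : Fin m) :
    toPermNat (swap i.castSucc i.succ) = swap (i : ℕ) (i + 1) := by
  ext x
  obtain hx | hx := lt_or_ge x (m + 1)
  · lift x to Fin (m + 1) using hx
    rw [toPermNat_apply_coe, swap_apply_def, swap_apply_def]
    split_ifs <;> simp_all [Fin.ext_iff]
  · rw [toPermNat_apply_of_lt _ (by omega), swap_apply_of_ne_of_ne (by omega) (by omega)]

theorem exists_descent_of_ne_one {v : Perm (Fin (m + 1))} (hv : v ≠ 1) :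
    ∃ i : Fin m, toPermNat v (i + 1) < toPermNat v i := by
  by_contra! hmono
  refine hv (Perm.ext fun x => congrFun (StrictMono.eq_id ?_) x)
  refine Fin.strictMono_iff_lt_succ.2 fun i => ?_
  have h1 : toPermNat v i = v i.castSucc := toPermNat_apply_coe v i.castSucc
  have h2 : toPermNat v (i + 1) = v i.succ := toPermNat_apply_coe v i.succ
  have hne := Fin.val_injective.ne (v.injective.ne (Fin.castSucc_lt_succ (i := i)).ne)
  have := hmono i
  rw [Fin.lt_def]
  omega

section Coxeter

variable {M : CoxeterMatrix (Fin m)} (cs : CoxeterSystem M (Perm (Fin (m + 1))))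

theorem toPermNat_simple (hs : ∀ i : Fin m, cs.simple i = swap i.castSucc i.succ) (i : Fin m) :
    toPermNat (cs.simple i) = swap (i : ℕ) (i + 1) := by
  rw [hs, toPermNat_swap]

theorem toPermNat_wordProd (hs : ∀ i : Fin m, cs.simple i = swap i.castSucc i.succ)
    (ω : List (Fin m)) :
    toPermNat (cs.wordProd ω) = ((ω.map (↑)).map fun i => swap i (i + 1)).prod := by
  simp [CoxeterSystem.wordProd, map_list_prod, toPermNat_simple cs hs, Function.comp_def]

theorem card_inversions_wordProd_le (hs : ∀ i : Fin m, cs.simple i = swap i.castSucc i.succ)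
    (ω : List (Fin m)) : #(inversions (toPermNat (cs.wordProd ω)) (m + 1)) ≤ ω.length := by
  induction ω using List.reverseRecOn with
  | nil => simpa [inversions] using fun a b _ _ h => h.le
  | append_singleton ω i ih =>
    rw [← List.concat_eq_append, cs.wordProd_concat, map_mul, toPermNat_simple cs hs,
      List.length_concat]
    have hi : (i : ℕ) + 1 < m + 1 := by omega
    rcases lt_or_gt_of_ne ((toPermNat (cs.wordProd ω)).injective.ne
      (show (i : ℕ) ≠ i + 1 by omega)) with h | h
    · rw [card_inversions_mul_swap hi h]
      omega
    · have := card_inversions_mul_swap_add_one hi h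
      omega

theorem length_le_card_inversions (hs : ∀ i : Fin m, cs.simple i = swap i.castSucc i.succ)
    (v : Perm (Fin (m + 1))) : cs.length v ≤ #(inversions (toPermNat v) (m + 1)) := by
  induction hN : #(inversions (toPermNat v) (m + 1)) using Nat.strong_induction_on
    generalizing v with
  | _ N ih =>
  by_cases hv : v = 1
  · simp [hv]
  obtain ⟨i, hi⟩ := exists_descent_of_ne_one hv
  have hdesc := card_inversions_mul_swap_add_one (n := m + 1) (by omega) hi
  rw [← toPermNat_simple cs hs, ← map_mul] at hdesc
  calc cs.length v = cs.length (v * cs.simple i * cs.simple i) := by simp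
    _ ≤ cs.length (v * cs.simple i) + 1 := by
      simpa using cs.length_mul_le (v * cs.simple i) (cs.simple i)
    _ ≤ N := by
      have := ih _ (by omega) (v * cs.simple i) rfl
      omega

theorem length_eq_card_inversions (hs : ∀ i : Fin m, cs.simple i = swap i.castSucc i.succ)
    (v : Perm (Fin (m + 1))) : cs.length v = #(inversions (toPermNat v) (m + 1)) := by
  refine (length_le_card_inversions cs hs v).antisymm ?_
  obtain ⟨ω, hω, rfl⟩ := cs.exists_isReduced v
  exact hω ▸ card_inversions_wordProd_le cs hs ω

theorem isRightDescent_iff (hs : ∀ i : Fin m, cs.simple i = swap i.castSucc i.succ)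
    (v : Perm (Fin (m + 1))) (i : Fin m) :
    cs.IsRightDescent v i ↔ toPermNat v (i + 1) < toPermNat v i := by
  rw [CoxeterSystem.IsRightDescent, length_eq_card_inversions cs hs,
    length_eq_card_inversions cs hs, map_mul, toPermNat_simple cs hs]
  have hi : (i : ℕ) + 1 < m + 1 := by omega
  rcases lt_or_gt_of_ne ((toPermNat v).injective.ne (show (i : ℕ) ≠ i + 1 by omega)) with h | h
  · rw [card_inversions_mul_swap hi h]
    omega
  · have := card_inversions_mul_swap_add_one hi h
    omega

theorem isLeftDescent_iff (hs : ∀ i : Fin m, cs.simple i = swap i.castSucc i.succ)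
    (v : Perm (Fin (m + 1))) (i : Fin m) :
    cs.IsLeftDescent v i ↔ (toPermNat v)⁻¹ (i + 1) < (toPermNat v)⁻¹ i := by
  rw [← cs.isRightDescent_inv_iff, isRightDescent_iff cs hs, map_inv]

theorem notMem_of_isReduced (hs : ∀ i : Fin m, cs.simple i = swap i.castSucc i.succ)
    {ω : List (Fin m)} (hω : cs.IsReduced ω) {j : ℕ}
    (hj : toPermNat (cs.wordProd ω) ∈ stabIic j) : ∀ i ∈ ω, (i : ℕ) ≠ j := by
  induction ω with
  | nil => simp
  | cons c ω ih =>
    have hred : cs.IsReduced ω := by simpa using hω.drop 1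
    have hdesc : cs.IsLeftDescent (cs.wordProd (c :: ω)) c := by
      rw [cs.isLeftDescent_iff, hω.eq, cs.wordProd_cons, cs.simple_mul_simple_cancel_left,
        hred.eq, List.length_cons]
    rw [cs.wordProd_cons, map_mul, toPermNat_simple cs hs] at hj
    have hcj : (c : ℕ) ≠ j := by
      rintro rfl
      rw [isLeftDescent_iff cs hs, cs.wordProd_cons, map_mul, toPermNat_simple cs hs] at hdesc
      have hinv := mem_stabIic.1 ((stabIic _).inv_mem hj)
      have := (hinv c).1 le_rfl
      have := hinv (c + 1)
      omega
    intro i hi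
    rcases List.mem_cons.1 hi with rfl | hi
    · exact hcj
    · exact ih hred (by simpa using (stabIic j).mul_mem (swap_mem_stabIic hcj) hj) i hi

theorem mem_supp_iff (hs : ∀ i : Fin m, cs.simple i = swap i.castSucc i.succ)
    (w : Perm (Fin (m + 1))) (i : Fin m) : i ∈ cs.supp w ↔ toPermNat w ∉ stabIic i := by
  constructor
  · rintro ⟨ω, hω, rfl, hi⟩ hstab
    exact notMem_of_isReduced cs hs hω hstab i hi rfl
  · intro hw
    obtain ⟨ω, hω, rfl⟩ := cs.exists_isReduced w
    refine ⟨ω, hω, rfl, ?_⟩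
    by_contra hi
    refine hw (toPermNat_wordProd cs hs ω ▸ list_prod_swap_mem_stabIic ?_)
    simp only [List.mem_map]
    rintro _ ⟨a, ha, rfl⟩ hai
    exact hi (Fin.ext hai ▸ ha)

theorem exists_mem_stabIic_of_supp_ne_univ
    (hs : ∀ i : Fin m, cs.simple i = swap i.castSucc i.succ) {u : Perm (Fin (m + 1))}
    (hu : cs.supp u ≠ Set.univ) : ∃ j : Fin m, toPermNat u ∈ stabIic j := by
  obtain ⟨j, hj⟩ := (Set.ne_univ_iff_exists_notMem _).1 hu
  exact ⟨j, not_not.1 ((mem_supp_iff cs hs u j).not.1 hj)⟩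

theorem supportCritical_toPermNat (hs : ∀ i : Fin m, cs.simple i = swap i.castSucc i.succ)
    {w : Perm (Fin (m + 1))} (hfull : cs.supp w = Set.univ)
    (hL : ∀ i : Fin m, cs.IsLeftDescent w i → cs.supp (cs.simple i * w) ≠ Set.univ)
    (hR : ∀ i : Fin m, cs.IsRightDescent w i → cs.supp (w * cs.simple i) ≠ Set.univ) :
    SupportCritical (toPermNat w) m := by
  have notMem : ∀ j < m, toPermNat w ∉ stabIic j := fun j hj =>
    (mem_supp_iff cs hs w ⟨j, hj⟩).1 (hfull ▸ Set.mem_univ _)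
  refine ⟨fun x => toPermNat_apply_of_lt w, notMem, fun i hi hdesc => ?_, fun i hi hdesc => ?_⟩
  · obtain ⟨j, hj⟩ := exists_mem_stabIic_of_supp_ne_univ cs hs
      (hR ⟨i, hi⟩ ((isRightDescent_iff cs hs w _).2 hdesc))
    rw [map_mul, toPermNat_simple cs hs] at hj
    exact mem_stabIic_of_mul_swap_mem (notMem j j.isLt) hj
  · obtain ⟨j, hj⟩ := exists_mem_stabIic_of_supp_ne_univ cs hs
      (hL ⟨i, hi⟩ ((isLeftDescent_iff cs hs w _).2 hdesc))
    rw [map_mul, toPermNat_simple cs hs, ← inv_mem_iff, mul_inv_rev, swap_inv] at hj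
    exact mem_stabIic_of_mul_swap_mem (fun h => notMem j j.isLt (inv_mem_iff.1 h)) hj

end Coxeter

end PermCoxeter

/-- Let `w ∈ S_n` have full support.  If for every left descent `s` of `w` either
`Supp(sw) ≠ S`, and for every right descent `s` of `w`
`Supp(ws) ≠ S`, then `w` is a Coxeter element. -/
theorem stmt_10 {m : ℕ}
    (cs : CoxeterSystem (CoxeterMatrix.Aₙ m) (Equiv.Perm (Fin (m + 1))))
    (hs : ∀ i : Fin m, cs.simple i = Equiv.swap i.castSucc i.succ)
    (w : Equiv.Perm (Fin (m + 1)))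
    (hfull : cs.supp w = Set.univ)
    (hL : ∀ i : Fin m, cs.IsLeftDescent w i → cs.supp (cs.simple i * w) ≠ Set.univ)
    (hR : ∀ i : Fin m, cs.IsRightDescent w i → cs.supp (w * cs.simple i) ≠ Set.univ) :
    ∃ ω : List (Fin m), ω.Nodup ∧ (∀ i : Fin m, i ∈ ω) ∧ w = cs.wordProd ω := by
  have hw := PermCoxeter.supportCritical_toPermNat cs hs hfull hL hR
  obtain ⟨l, hnd, hlt, hprod⟩ := hw.isProdDistinctAdjSwaps
  refine ⟨l.pmap Fin.mk hlt, hnd.pmap fun _ _ _ _ => Fin.mk.inj, fun i => ?_,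
    PermCoxeter.toPermNat_injective ?_⟩
  · by_contra hi
    refine hw.notMem i i.isLt (hprod ▸ PermCoxeter.list_prod_swap_mem_stabIic fun a ha hai => ?_)
    exact hi (List.mem_pmap.2 ⟨a, ha, Fin.ext hai⟩)
  · simp [PermCoxeter.toPermNat_wordProd cs hs, List.map_pmap, hprod]
end

section
/- Let x = t_{v(μ)} w in the extended affine Weyl group with μ regular dominant, v, w in the finite Weyl group, and ℓ(v⁻¹w) = ℓ(v⁻¹) + ℓ(w). Let s be a simple reflection of the finite Weyl group with ℓ(sws) < ℓ(w) and sws ≠ w. Then ℓ(x) > ℓ(sx) = ℓ(xs) > ℓ(sxs), and moreover ℓ(v⁻¹s·sw) = ℓ(v⁻¹s) + ℓ(sw). -/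
/-- The length of the extended affine Weyl group element `t_{a(μ)} b` for `μ` regular
dominant: `ℓ(t_{a(μ)} b) = ℓ(t_μ) + ℓ(a⁻¹ b) − ℓ(a⁻¹)`, where `Lμ = ℓ(t_μ)`. -/
noncomputable def affLen {B W : Type*} [Group W] {M : CoxeterMatrix B}
    (cs : CoxeterSystem M W) (Lμ : ℤ) (a b : W) : ℤ :=
  Lμ + cs.length (a⁻¹ * b) - cs.length a⁻¹

/-- Let `x = t_{v(μ)} w` with `μ` regular dominant and `ℓ(v⁻¹w) = ℓ(v⁻¹) + ℓ(w)`, and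
let `s` be a simple reflection with `ℓ(sws) < ℓ(w)` and `sws ≠ w`.  Then
`ℓ(x) > ℓ(sx) = ℓ(xs) > ℓ(sxs)`, and `ℓ(v⁻¹s·sw) = ℓ(v⁻¹s) + ℓ(sw)`.  Here
`sx = t_{sv(μ)} sw`, `xs = t_{v(μ)} ws`, `sxs = t_{sv(μ)} sws`. -/
theorem stmt_16 {B W : Type*} [Group W] {M : CoxeterMatrix B}
    (cs : CoxeterSystem M W) (Lμ : ℤ) (v w : W) (i : B)
    (hadd : cs.length (v⁻¹ * w) = cs.length v⁻¹ + cs.length w)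
    (h1 : cs.length (cs.simple i * w * cs.simple i) < cs.length w)
    (h2 : cs.simple i * w * cs.simple i ≠ w) :
    affLen cs Lμ (cs.simple i * v) (cs.simple i * w) < affLen cs Lμ v w ∧
    affLen cs Lμ (cs.simple i * v) (cs.simple i * w) = affLen cs Lμ v (w * cs.simple i) ∧
    affLen cs Lμ (cs.simple i * v) (cs.simple i * w * cs.simple i)
      < affLen cs Lμ v (w * cs.simple i) ∧
    cs.length ((cs.simple i * v)⁻¹ * (cs.simple i * w))
      = cs.length (cs.simple i * v)⁻¹ + cs.length (cs.simple i * w) := by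
  have hss : cs.simple i * cs.simple i = 1 := cs.simple_mul_simple_self i
  have hsw : cs.length (cs.simple i * w) + 1 = cs.length w := by
    rcases cs.length_simple_mul w i with h | h
    · exfalso
      rcases cs.length_mul_simple (cs.simple i * w) i with h' | h' <;> omega
    · exact h
  have hws : cs.length (w * cs.simple i) + 1 = cs.length w := by
    rcases cs.length_mul_simple w i with h | h
    · exfalso
      have e : cs.simple i * (w * cs.simple i) = cs.simple i * w * cs.simple i := by group
      rcases cs.length_simple_mul (w * cs.simple i) i with h' | h' <;> rw [e] at h' <;> omega
    · exact h
  have hvs : cs.length (v⁻¹ * cs.simple i) = cs.length v⁻¹ + 1 := by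
    rcases cs.length_mul_simple v⁻¹ i with h | h
    · exact h
    · exfalso
      have e : v⁻¹ * cs.simple i * (cs.simple i * w) = v⁻¹ * w := by
        rw [mul_assoc, ← mul_assoc (cs.simple i) (cs.simple i), hss, one_mul]
      have := cs.length_mul_le (v⁻¹ * cs.simple i) (cs.simple i * w)
      rw [e] at this
      omega
  have hvws : cs.length (v⁻¹ * (w * cs.simple i)) + 1 = cs.length (v⁻¹ * w) := by
    have e : v⁻¹ * w * cs.simple i = v⁻¹ * (w * cs.simple i) := by group
    rcases cs.length_mul_simple (v⁻¹ * w) i with h | h <;> rw [e] at h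
    · exfalso
      have := cs.length_mul_le v⁻¹ (w * cs.simple i)
      omega
    · exact h
  have key1 : (cs.simple i * v)⁻¹ * (cs.simple i * w) = v⁻¹ * w := by
    rw [mul_inv_rev, mul_assoc, ← mul_assoc (cs.simple i)⁻¹, inv_mul_cancel, one_mul]
  have key2 : (cs.simple i * v)⁻¹ * (cs.simple i * w * cs.simple i) = v⁻¹ * (w * cs.simple i) := by
    rw [mul_inv_rev, mul_assoc, ← mul_assoc (cs.simple i)⁻¹, ← mul_assoc (cs.simple i)⁻¹,
      inv_mul_cancel, one_mul]
  have key3 : cs.length (cs.simple i * v)⁻¹ = cs.length (v⁻¹ * cs.simple i) := by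
    congr 1; rw [mul_inv_rev, cs.inv_simple]
  refine ⟨?_, ?_, ?_, ?_⟩
  · unfold affLen
    rw [key1, key3, hvs]
    push_cast; linarith
  · unfold affLen
    rw [key1, key3, hvs]
    push_cast; omega
  · unfold affLen
    rw [key2, key3, hvs]
    push_cast; omega
  · rw [key1, key3, hvs, hadd]
    omega
end

section
/- Let x = t_{v(μ)} w in the extended affine Weyl group with μ regular dominant and ℓ(v⁻¹w) = ℓ(v⁻¹) + ℓ(w). Suppose s is a simple reflection with ℓ(sws) = ℓ(w), sws ≠ w, s ∈ D_L(w), and ℓ(v⁻¹ws) = ℓ(v⁻¹w) + 1. Then ℓ(xs) > ℓ(x) = ℓ(sxs) > ℓ(sx), and ℓ(v⁻¹s · sws) = ℓ(v⁻¹s) + ℓ(sws). -/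
/-- Let `x = t_{v(μ)} w` with `μ` regular dominant and `ℓ(v⁻¹w) = ℓ(v⁻¹) + ℓ(w)`.
Suppose `s` is a simple reflection with `ℓ(sws) = ℓ(w)`, `sws ≠ w`, `s ∈ D_L(w)`, and
`ℓ(v⁻¹ws) = ℓ(v⁻¹w) + 1`.  Then `ℓ(xs) > ℓ(x) = ℓ(sxs) > ℓ(sx)`, and
`ℓ(v⁻¹s·sws) = ℓ(v⁻¹s) + ℓ(sws)`.  Here `sx = t_{sv(μ)} sw`, `xs = t_{v(μ)} ws`,
`sxs = t_{sv(μ)} sws`. -/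
theorem stmt_17 {B W : Type*} [Group W] {M : CoxeterMatrix B}
    (cs : CoxeterSystem M W) (Lμ : ℤ) (v w : W) (i : B)
    (hadd : cs.length (v⁻¹ * w) = cs.length v⁻¹ + cs.length w)
    (h1 : cs.length (cs.simple i * w * cs.simple i) = cs.length w)
    (h2 : cs.simple i * w * cs.simple i ≠ w)
    (h3 : cs.IsLeftDescent w i)
    (h4 : cs.length (v⁻¹ * w * cs.simple i) = cs.length (v⁻¹ * w) + 1) :
    affLen cs Lμ v w < affLen cs Lμ v (w * cs.simple i) ∧
    affLen cs Lμ v w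
      = affLen cs Lμ (cs.simple i * v) (cs.simple i * w * cs.simple i) ∧
    affLen cs Lμ (cs.simple i * v) (cs.simple i * w)
      < affLen cs Lμ (cs.simple i * v) (cs.simple i * w * cs.simple i) ∧
    cs.length ((cs.simple i * v)⁻¹ * (cs.simple i * w * cs.simple i))
      = cs.length (cs.simple i * v)⁻¹
        + cs.length (cs.simple i * w * cs.simple i) := by
  set s := cs.simple i with hs
  -- group simplifications
  have e1 : (s * v)⁻¹ * (s * w * s) = v⁻¹ * w * s := by
    simp [hs, mul_assoc, cs.inv_simple]
  have e2 : (s * v)⁻¹ * (s * w) = v⁻¹ * w := by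
    simp [hs, mul_assoc, cs.inv_simple]
  have e3 : (s * v)⁻¹ = v⁻¹ * s := by simp [hs, cs.inv_simple]
  -- descent: ℓ(sw) + 1 = ℓ(w)
  have hsw : cs.length (s * w) + 1 = cs.length w := cs.isLeftDescent_iff.mp h3
  -- ℓ(v⁻¹ s) = ℓ(v⁻¹) + 1
  have hvs : cs.length (v⁻¹ * s) = cs.length v⁻¹ + 1 := by
    rcases cs.length_mul_simple v⁻¹ i with h | h <;> rw [← hs] at h
    · exact h
    · exfalso
      have : v⁻¹ * w = (v⁻¹ * s) * (s * w) := by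
        simp [hs, mul_assoc, cs.inv_simple]
      have hle := cs.length_mul_le (v⁻¹ * s) (s * w)
      rw [← this] at hle
      omega
  refine ⟨?_, ?_, ?_, ?_⟩
  · unfold affLen
    rw [← mul_assoc, h4]
    push_cast
    omega
  · unfold affLen
    rw [e1, e3, hvs, h4]
    push_cast
    omega
  · unfold affLen
    rw [e1, e2, h4]
    push_cast
    omega
  · rw [e1, e3, hvs, h4, hadd, h1]
    omega
end
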